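/- arXiv:1607.06270 — 10 statements merged into one kernel-verified Lean document; each statement's English description precedes it below -/
import Mathlib

section
/- If X and Y are resolvable subspaces of a topological space Z, then their union X ∪ Y is a resolvable subspace of Z. (A crowded space is resolvable if it contains two disjoint dense subsets.) -/
/-- A subset `A` of a topological space `Z` is a resolvable subspace if it contains
two disjoint subsets, each dense in `A` (with the subspace topology, i.e. `A ⊆ closure D`). -/
def ResolvableIn {Z : Type*} [TopologicalSpace Z] (A : Set Z) : Prop :=
  ∃ D₀ D₁ : Set Z, D₀ ⊆ A ∧ D₁ ⊆ A ∧ Disjoint D₀ D₁ ∧ A ⊆ closure D₀ ∧ A ⊆ closure D₁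

theorem union_of_two_resolvable_is_resolvable {Z : Type*} [TopologicalSpace Z]
    (X Y : Set Z) (hX : ResolvableIn X) (hY : ResolvableIn Y) :
    ResolvableIn (X ∪ Y) := by
  obtain ⟨D₀, D₁, hD₀X, hD₁X, hDdisj, hXD₀, hXD₁⟩ := hX
  obtain ⟨E₀, E₁, hE₀Y, hE₁Y, hEdisj, hYE₀, hYE₁⟩ := hY
  refine ⟨D₀ ∪ (E₀ \ X), D₁ ∪ (E₁ \ X), ?_, ?_, ?_, ?_, ?_⟩
  · exact Set.union_subset (hD₀X.trans Set.subset_union_left)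
      (fun z hz => Or.inr (hE₀Y hz.1))
  · exact Set.union_subset (hD₁X.trans Set.subset_union_left)
      (fun z hz => Or.inr (hE₁Y hz.1))
  · rw [Set.disjoint_union_left]
    constructor
    · rw [Set.disjoint_union_right]
      exact ⟨hDdisj, Set.disjoint_left.2 fun z hz hz' => hz'.2 (hD₀X hz)⟩
    · rw [Set.disjoint_union_right]
      exact ⟨Set.disjoint_left.2 fun z hz hz' => hz.2 (hD₁X hz'),
        Set.disjoint_of_subset Set.diff_subset Set.diff_subset hEdisj⟩
  · have key : E₀ ⊆ closure (D₀ ∪ (E₀ \ X)) := by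
      intro z hz
      by_cases hzX : z ∈ X
      · exact closure_mono Set.subset_union_left (hXD₀ hzX)
      · exact subset_closure (Or.inr ⟨hz, hzX⟩)
    rintro z (hz | hz)
    · exact closure_mono Set.subset_union_left (hXD₀ hz)
    · exact closure_minimal key isClosed_closure (hYE₀ hz)
  · have key : E₁ ⊆ closure (D₁ ∪ (E₁ \ X)) := by
      intro z hz
      by_cases hzX : z ∈ X
      · exact closure_mono Set.subset_union_left (hXD₁ hzX)
      · exact subset_closure (Or.inr ⟨hz, hzX⟩)
    rintro z (hz | hz)
    · exact closure_mono Set.subset_union_left (hXD₁ hz)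
    · exact closure_minimal key isClosed_closure (hYE₁ hz)
end

section
/- An arbitrary union of resolvable subspaces of a topological space is resolvable. -/
/-- Step lemma: from a resolvable set `A` and a point `x ∈ A` not in `closure D`,
extract a disjoint dense pair inside `A \ closure D`, with the first piece nonempty. -/
lemma resolvable_step {Z : Type*} [TopologicalSpace Z] {A : Set Z} (hA : ResolvableIn A)
    {D : Set Z} {x : Z} (hx : x ∈ A) (hxD : x ∉ closure D) :
    ∃ E₀ E₁ : Set Z, E₀.Nonempty ∧ E₀ ⊆ A ∧ E₁ ⊆ A ∧ Disjoint E₀ E₁ ∧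
      Disjoint E₀ (closure D) ∧ Disjoint E₁ (closure D) ∧
      E₀ ∪ E₁ ⊆ closure E₀ ∧ E₀ ∪ E₁ ⊆ closure E₁ := by
  obtain ⟨F₀, F₁, hF₀A, hF₁A, hdisj, hd₀, hd₁⟩ := hA
  set V : Set Z := (closure D)ᶜ with hV
  have hVopen : IsOpen V := isClosed_closure.isOpen_compl
  refine ⟨V ∩ F₀, V ∩ F₁, ?_, ?_, ?_, ?_, ?_, ?_, ?_, ?_⟩
  · -- nonempty since x ∈ closure (V ∩ F₀)
    have hxcl : x ∈ closure (V ∩ F₀) := hVopen.inter_closure ⟨hxD, hd₀ hx⟩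
    rcases (V ∩ F₀).eq_empty_or_nonempty with h | h
    · rw [h, closure_empty] at hxcl; exact absurd hxcl (Set.notMem_empty x)
    · exact h
  · exact (Set.inter_subset_right).trans hF₀A
  · exact (Set.inter_subset_right).trans hF₁A
  · exact (hdisj.mono Set.inter_subset_right Set.inter_subset_right)
  · exact Set.disjoint_left.mpr fun y hy hyc => hy.1 hyc
  · exact Set.disjoint_left.mpr fun y hy hyc => hy.1 hyc
  · intro y hy
    have hyA : y ∈ V ∩ A := by
      rcases hy with hy | hy
      · exact ⟨hy.1, hF₀A hy.2⟩
      · exact ⟨hy.1, hF₁A hy.2⟩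
    exact hVopen.inter_closure ⟨hyA.1, hd₀ hyA.2⟩
  · intro y hy
    have hyA : y ∈ V ∩ A := by
      rcases hy with hy | hy
      · exact ⟨hy.1, hF₀A hy.2⟩
      · exact ⟨hy.1, hF₁A hy.2⟩
    exact hVopen.inter_closure ⟨hyA.1, hd₁ hyA.2⟩

theorem union_of_resolvable_is_resolvable {Z : Type*} [TopologicalSpace Z]
    {ι : Type*} (X : ι → Set Z) (hX : ∀ i, ResolvableIn (X i)) :
    ResolvableIn (⋃ i, X i) := by
  set U : Set Z := ⋃ i, X i with hU
  set T : Set (Set Z × Set Z) :=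
    {p | p.1 ⊆ U ∧ p.2 ⊆ U ∧ Disjoint p.1 p.2 ∧
      p.1 ∪ p.2 ⊆ closure p.1 ∧ p.1 ∪ p.2 ⊆ closure p.2} with hT
  -- Zorn's lemma on T
  obtain ⟨m, hm⟩ : ∃ m, Maximal (· ∈ T) m := by
    apply zorn_le₀ T
    intro c hcT hc
    refine ⟨⟨⋃ p ∈ c, p.1, ⋃ p ∈ c, p.2⟩, ⟨?_, ?_, ?_, ?_, ?_⟩, ?_⟩
    · exact Set.iUnion₂_subset fun p hp => (hcT hp).1
    · exact Set.iUnion₂_subset fun p hp => (hcT hp).2.1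
    · rw [Set.disjoint_left]
      rintro a ha₁ ha₂
      simp only [Set.mem_iUnion] at ha₁ ha₂
      obtain ⟨p, hp, hap⟩ := ha₁
      obtain ⟨q, hq, haq⟩ := ha₂
      rcases eq_or_ne p q with rfl | hne
      · exact ((hcT hp).2.2.1).le_bot ⟨hap, haq⟩
      · rcases hc hp hq hne with h | h
        · exact ((hcT hq).2.2.1).le_bot ⟨h.1 hap, haq⟩
        · exact ((hcT hp).2.2.1).le_bot ⟨hap, h.2 haq⟩
    · rintro a (ha | ha) <;> simp only [Set.mem_iUnion] at ha <;>
        obtain ⟨p, hp, hap⟩ := ha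
      · exact closure_mono (Set.subset_iUnion₂ p hp) ((hcT hp).2.2.2.1 (Or.inl hap))
      · exact closure_mono (Set.subset_iUnion₂ p hp) ((hcT hp).2.2.2.1 (Or.inr hap))
    · rintro a (ha | ha) <;> simp only [Set.mem_iUnion] at ha <;>
        obtain ⟨p, hp, hap⟩ := ha
      · exact closure_mono (Set.subset_iUnion₂ p hp) ((hcT hp).2.2.2.2 (Or.inl hap))
      · exact closure_mono (Set.subset_iUnion₂ p hp) ((hcT hp).2.2.2.2 (Or.inr hap))
    · intro p hp
      exact ⟨Set.subset_biUnion_of_mem (u := fun q => q.1) hp,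
        Set.subset_biUnion_of_mem (u := fun q => q.2) hp⟩
  obtain ⟨hm₁U, hm₂U, hmdisj, hmd₁, hmd₂⟩ := hm.prop
  refine ⟨m.1, m.2, hm₁U, hm₂U, hmdisj, ?_, ?_⟩
  · -- U ⊆ closure m.1
    intro x hxU
    by_contra hx
    obtain ⟨i, hxi⟩ := Set.mem_iUnion.mp hxU
    obtain ⟨E₀, E₁, hE₀ne, hE₀A, hE₁A, hEdisj, hE₀D, hE₁D, hEd₀, hEd₁⟩ :=
      resolvable_step (hX i) hxi hx
    have hE₀m : Disjoint E₀ (m.1 ∪ m.2) :=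
      hE₀D.mono_right hmd₁
    have hE₁m : Disjoint E₁ (m.1 ∪ m.2) :=
      hE₁D.mono_right hmd₁
    have hq : (m.1 ∪ E₀, m.2 ∪ E₁) ∈ T := by
      refine ⟨Set.union_subset hm₁U (hE₀A.trans (Set.subset_iUnion X i)),
        Set.union_subset hm₂U (hE₁A.trans (Set.subset_iUnion X i)), ?_, ?_, ?_⟩
      · rw [Set.disjoint_union_left, Set.disjoint_union_right, Set.disjoint_union_right]
        exact ⟨⟨hmdisj, (hE₁m.mono_right Set.subset_union_left).symm⟩,
          hE₀m.mono_right Set.subset_union_right, hEdisj⟩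
      · rintro a ha
        have : a ∈ (m.1 ∪ m.2) ∪ (E₀ ∪ E₁) := by
          rcases ha with (h | h) | (h | h)
          · exact Or.inl (Or.inl h)
          · exact Or.inr (Or.inl h)
          · exact Or.inl (Or.inr h)
          · exact Or.inr (Or.inr h)
        rcases this with h | h
        · exact closure_mono Set.subset_union_left (hmd₁ h)
        · exact closure_mono Set.subset_union_right (hEd₀ h)
      · rintro a ha
        have : a ∈ (m.1 ∪ m.2) ∪ (E₀ ∪ E₁) := by
          rcases ha with (h | h) | (h | h)
          · exact Or.inl (Or.inl h)
          · exact Or.inr (Or.inl h)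
          · exact Or.inl (Or.inr h)
          · exact Or.inr (Or.inr h)
        rcases this with h | h
        · exact closure_mono Set.subset_union_left (hmd₂ h)
        · exact closure_mono Set.subset_union_right (hEd₁ h)
    have hle : m ≤ (m.1 ∪ E₀, m.2 ∪ E₁) :=
      ⟨Set.subset_union_left, Set.subset_union_left⟩
    have := hm.2 hq hle
    obtain ⟨a, ha⟩ := hE₀ne
    exact (hE₀m.mono_right Set.subset_union_left).le_bot
      ⟨ha, this.1 (Or.inr ha)⟩
  · -- U ⊆ closure m.2
    intro x hxU
    by_contra hx
    obtain ⟨i, hxi⟩ := Set.mem_iUnion.mp hxU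
    obtain ⟨E₀, E₁, hE₀ne, hE₀A, hE₁A, hEdisj, hE₀D, hE₁D, hEd₀, hEd₁⟩ :=
      resolvable_step (hX i) hxi hx
    have hE₀m : Disjoint E₀ (m.1 ∪ m.2) :=
      hE₀D.mono_right hmd₂
    have hE₁m : Disjoint E₁ (m.1 ∪ m.2) :=
      hE₁D.mono_right hmd₂
    have hq : (m.1 ∪ E₁, m.2 ∪ E₀) ∈ T := by
      refine ⟨Set.union_subset hm₁U (hE₁A.trans (Set.subset_iUnion X i)),
        Set.union_subset hm₂U (hE₀A.trans (Set.subset_iUnion X i)), ?_, ?_, ?_⟩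
      · rw [Set.disjoint_union_left, Set.disjoint_union_right, Set.disjoint_union_right]
        exact ⟨⟨hmdisj, (hE₀m.mono_right Set.subset_union_left).symm⟩,
          hE₁m.mono_right Set.subset_union_right, hEdisj.symm⟩
      · rintro a ha
        have : a ∈ (m.1 ∪ m.2) ∪ (E₀ ∪ E₁) := by
          rcases ha with (h | h) | (h | h)
          · exact Or.inl (Or.inl h)
          · exact Or.inr (Or.inr h)
          · exact Or.inl (Or.inr h)
          · exact Or.inr (Or.inl h)
        rcases this with h | h
        · exact closure_mono Set.subset_union_left (hmd₁ h)
        · exact closure_mono Set.subset_union_right (hEd₁ h)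
      · rintro a ha
        have : a ∈ (m.1 ∪ m.2) ∪ (E₀ ∪ E₁) := by
          rcases ha with (h | h) | (h | h)
          · exact Or.inl (Or.inl h)
          · exact Or.inr (Or.inr h)
          · exact Or.inl (Or.inr h)
          · exact Or.inr (Or.inl h)
        rcases this with h | h
        · exact closure_mono Set.subset_union_left (hmd₂ h)
        · exact closure_mono Set.subset_union_right (hEd₀ h)
    have hle : m ≤ (m.1 ∪ E₁, m.2 ∪ E₀) :=
      ⟨Set.subset_union_left, Set.subset_union_left⟩
    have := hm.2 hq hle
    obtain ⟨a, ha⟩ := hE₀ne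
    exact (hE₀m.mono_right Set.subset_union_right).le_bot
      ⟨ha, this.2 (Or.inr ha)⟩
end

section
/- If X is an irresolvable crowded space that is not open hereditarily irresolvable, then X contains a maximal (with respect to inclusion) resolvable subspace R, R is closed in X, and the complement X \ R is open hereditarily irresolvable. -/
/-- An irresolvable crowded space which is not OHI contains a maximal resolvable subspace `R`;
`R` is closed, and its complement is open hereditarily irresolvable. -/
theorem max_resolvable_subspace {X : Type*} [TopologicalSpace X]
    (hcrowded : ∀ x : X, ¬ IsOpen ({x} : Set X))
    (hirr : ¬ ∃ D₀ D₁ : Set X, Disjoint D₀ D₁ ∧ Dense D₀ ∧ Dense D₁)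
    (hnotOHI : ¬ ∀ U : Set X, IsOpen U → U.Nonempty → ¬ ResolvableIn U) :
    ∃ R : Set X, ResolvableIn R ∧
      (∀ S : Set X, ResolvableIn S → R ⊆ S → S = R) ∧
      IsClosed R ∧
      (∀ U : Set X, IsOpen U → (U ∩ Rᶜ).Nonempty → ¬ ResolvableIn (U ∩ Rᶜ)) := by
  classical
  -- The poset of "resolving pairs"
  set P : Set (Set X × Set X) :=
    {p | Disjoint p.1 p.2 ∧ p.1 ∪ p.2 ⊆ closure p.1 ∧ p.1 ∪ p.2 ⊆ closure p.2} with hP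
  obtain ⟨m, hmax⟩ := zorn_le₀ P (by
    intro c hcP hc
    refine ⟨(⋃ p ∈ c, p.1, ⋃ p ∈ c, p.2), ⟨?_, ?_, ?_⟩, ?_⟩
    · rw [Set.disjoint_left]
      rintro x hx0 hx1
      simp only [Set.mem_iUnion] at hx0 hx1
      obtain ⟨p, hpc, hxp⟩ := hx0
      obtain ⟨q, hqc, hxq⟩ := hx1
      rcases hc.total hpc hqc with h | h
      · exact Set.disjoint_left.1 (hcP hqc).1 (h.1 hxp) hxq
      · exact Set.disjoint_left.1 (hcP hpc).1 hxp (h.2 hxq)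
    · rintro x (hx | hx) <;> simp only [Set.mem_iUnion] at hx <;>
        obtain ⟨p, hpc, hxp⟩ := hx
      · exact closure_mono (Set.subset_biUnion_of_mem (u := fun p : Set X × Set X => p.1) hpc)
          ((hcP hpc).2.1 (Or.inl hxp))
      · exact closure_mono (Set.subset_biUnion_of_mem (u := fun p : Set X × Set X => p.1) hpc)
          ((hcP hpc).2.1 (Or.inr hxp))
    · rintro x (hx | hx) <;> simp only [Set.mem_iUnion] at hx <;>
        obtain ⟨p, hpc, hxp⟩ := hx
      · exact closure_mono (Set.subset_biUnion_of_mem (u := fun p : Set X × Set X => p.2) hpc)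
          ((hcP hpc).2.2 (Or.inl hxp))
      · exact closure_mono (Set.subset_biUnion_of_mem (u := fun p : Set X × Set X => p.2) hpc)
          ((hcP hpc).2.2 (Or.inr hxp))
    · intro p hpc
      exact ⟨Set.subset_biUnion_of_mem (u := fun p : Set X × Set X => p.1) hpc,
        Set.subset_biUnion_of_mem (u := fun p : Set X × Set X => p.2) hpc⟩)
  obtain ⟨hdisj, hcl0, hcl1⟩ := hmax.1
  set R : Set X := closure m.1 ∩ closure m.2 with hR
  have hRclosed : IsClosed R := isClosed_closure.inter isClosed_closure
  have hm0R : m.1 ⊆ R := fun x hx => ⟨subset_closure hx, hcl1 (Or.inl hx)⟩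
  have hm1R : m.2 ⊆ R := fun x hx => ⟨hcl0 (Or.inr hx), subset_closure hx⟩
  -- every resolvable set is contained in R
  have key : ∀ S : Set X, ResolvableIn S → S ⊆ R := by
    rintro S ⟨E₀, E₁, hE0S, hE1S, hE, hS0, hS1⟩
    -- extend m by the parts of E₀, E₁ outside R
    set p : Set X × Set X := (m.1 ∪ (E₀ \ R), m.2 ∪ (E₁ \ R)) with hp
    have hcl0' : closure E₀ ⊆ closure p.1 := by
      apply closure_minimal _ isClosed_closure
      intro x hx
      by_cases hxR : x ∈ R
      · exact closure_mono Set.subset_union_left hxR.1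
      · exact subset_closure (Or.inr ⟨hx, hxR⟩)
    have hcl1' : closure E₁ ⊆ closure p.2 := by
      apply closure_minimal _ isClosed_closure
      intro x hx
      by_cases hxR : x ∈ R
      · exact closure_mono Set.subset_union_left hxR.2
      · exact subset_closure (Or.inr ⟨hx, hxR⟩)
    have hpP : p ∈ P := by
      refine ⟨?_, ?_, ?_⟩
      · rw [Set.disjoint_left]
        rintro x (hx | hx) (hy | hy)
        · exact Set.disjoint_left.1 hdisj hx hy
        · exact hy.2 (hm0R hx)
        · exact hx.2 (hm1R hy)
        · exact Set.disjoint_left.1 hE hx.1 hy.1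
      · rintro x (hx | hx)
        · rcases hx with hx | hx
          · exact closure_mono Set.subset_union_left (subset_closure hx)
          · exact hcl0' (hS0 (hE0S hx.1))
        · rcases hx with hx | hx
          · exact closure_mono Set.subset_union_left (hcl0 (Or.inr hx))
          · exact hcl0' (hS0 (hE1S hx.1))
      · rintro x (hx | hx)
        · rcases hx with hx | hx
          · exact closure_mono Set.subset_union_left (hcl1 (Or.inl hx))
          · exact hcl1' (hS1 (hE0S hx.1))
        · rcases hx with hx | hx
          · exact closure_mono Set.subset_union_left (subset_closure hx)
          · exact hcl1' (hS1 (hE1S hx.1))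
    have hle : m ≤ p := ⟨Set.subset_union_left, Set.subset_union_left⟩
    have hpm : p ≤ m := hmax.2 hpP hle
    have hE0R : E₀ ⊆ R := by
      intro x hx
      by_cases hxR : x ∈ R
      · exact hxR
      · exact hm0R (hpm.1 (Or.inr ⟨hx, hxR⟩))
    have hE1R : E₁ ⊆ R := by
      intro x hx
      by_cases hxR : x ∈ R
      · exact hxR
      · exact hm1R (hpm.2 (Or.inr ⟨hx, hxR⟩))
    intro x hx
    constructor
    · exact closure_minimal (fun y hy => (hE0R hy).1) isClosed_closure (hS0 hx)
    · exact closure_minimal (fun y hy => (hE1R hy).2) isClosed_closure (hS1 hx)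
  have hRres : ResolvableIn R :=
    ⟨m.1, m.2, hm0R, hm1R, hdisj, Set.inter_subset_left, Set.inter_subset_right⟩
  refine ⟨R, hRres, ?_, hRclosed, ?_⟩
  · intro S hS hRS
    exact le_antisymm (key S hS) hRS
  · intro U hU hne hres
    obtain ⟨x, hxU, hxR⟩ := hne
    exact hxR (key _ hres ⟨hxU, hxR⟩)
end

section
/- Every topological space whose topology is maximal among crowded zerodimensional topologies is extremally disconnected. -/
open TopologicalSpace Set Topology

/-- The topology obtained from `t` by adding `Wᶜ` as an open set. -/
private def auxTop {X : Type*} [TopologicalSpace X] (W : Set X) : TopologicalSpace X where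
  IsOpen s := ∃ A B : Set X, IsOpen A ∧ IsOpen B ∧ s = A ∪ (B ∩ Wᶜ)
  isOpen_univ := ⟨univ, ∅, isOpen_univ, isOpen_empty, by simp⟩
  isOpen_inter := by
    rintro s u ⟨A₁, B₁, hA₁, hB₁, rfl⟩ ⟨A₂, B₂, hA₂, hB₂, rfl⟩
    refine ⟨A₁ ∩ A₂, (A₁ ∩ B₂) ∪ (A₂ ∩ B₁) ∪ (B₁ ∩ B₂),
      hA₁.inter hA₂, ((hA₁.inter hB₂).union (hA₂.inter hB₁)).union (hB₁.inter hB₂), ?_⟩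
    ext x; by_cases hx : x ∈ W <;> simp [hx] <;> tauto
  isOpen_sUnion := by
    intro S hS
    choose A B hA hB hs using hS
    refine ⟨⋃ s : S, A s.1 s.2, ⋃ s : S, B s.1 s.2,
      isOpen_iUnion fun s => hA _ _, isOpen_iUnion fun s => hB _ _, ?_⟩
    ext x
    simp only [mem_sUnion, mem_union, mem_iUnion, mem_inter_iff, mem_compl_iff]
    constructor
    · rintro ⟨s, hsS, hxs⟩
      rw [hs s hsS] at hxs
      rcases hxs with h | h
      · exact Or.inl ⟨⟨s, hsS⟩, h⟩
      · exact Or.inr ⟨⟨⟨s, hsS⟩, h.1⟩, h.2⟩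
    · rintro (⟨⟨s, hsS⟩, h⟩ | ⟨⟨⟨s, hsS⟩, h⟩, hW⟩)
      · exact ⟨s, hsS, (hs s hsS) ▸ Or.inl h⟩
      · exact ⟨s, hsS, (hs s hsS) ▸ Or.inr ⟨h, hW⟩⟩

/-- Every maximal crowded zerodimensional space is extremally disconnected. -/
theorem maximal_crowded_zerodim_extremally_disconnected {X : Type*} [t : TopologicalSpace X]
    (hcrowded : ∀ x : X, ¬ IsOpen ({x} : Set X))
    (hzd : TopologicalSpace.IsTopologicalBasis {s : Set X | IsClopen s})
    (hmax : ∀ σ : TopologicalSpace X, σ ≤ t →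
      (∀ x : X, ¬ @IsOpen X σ {x}) →
      @TopologicalSpace.IsTopologicalBasis X σ {s : Set X | @IsClopen X σ s} →
      σ = t) :
    ∀ U : Set X, IsOpen U → IsOpen (closure U) := by
  intro U hU
  set W := interior (closure U) with hWdef
  have hWopen : IsOpen W := isOpen_interior
  have hUW : U ⊆ W := interior_maximal subset_closure hU
  have hWcl : closure W ⊆ closure U := closure_minimal interior_subset isClosed_closure
  have hto : ∀ s : Set X, IsOpen s → @IsOpen X (auxTop W) s :=
    fun s hs => ⟨s, ∅, hs, isOpen_empty, by simp⟩
  have hle : auxTop W ≤ t := by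
    rw [TopologicalSpace.le_def]
    exact fun s hs => hto s hs
  have hWc : @IsOpen X (auxTop W) Wᶜ := ⟨∅, univ, isOpen_empty, isOpen_univ, by simp⟩
  have hclopen : ∀ c : Set X, IsClopen c → @IsClopen X (auxTop W) c :=
    fun c hc => ⟨@IsClosed.mk X (auxTop W) c (hto _ hc.1.isOpen_compl), hto _ hc.2⟩
  -- the new topology is crowded
  have hcrowdσ : ∀ x : X, ¬ @IsOpen X (auxTop W) ({x} : Set X) := by
    intro x hx
    obtain ⟨A, B, hA, hB, hABx⟩ := hx
    have hsub : A ∪ (B ∩ Wᶜ) ⊆ {x} := hABx ▸ Subset.rfl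
    by_cases hxA : x ∈ A
    · have : A = {x} :=
        subset_antisymm (fun y hy => hsub (Or.inl hy)) (by simpa using hxA)
      exact hcrowded x (this ▸ hA)
    · have hxmem : x ∈ A ∪ (B ∩ Wᶜ) := hABx ▸ rfl
      have hxB : x ∈ B ∩ Wᶜ := hxmem.resolve_left hxA
      have hBW : B \ {x} ⊆ W := by
        intro y hy
        by_contra hyW
        exact hy.2 (hsub (Or.inr ⟨hy.1, hyW⟩))
      have hxcl : x ∈ closure (B \ {x}) := by
        rw [mem_closure_iff]
        intro O hO hxO
        by_contra hne
        rw [not_nonempty_iff_eq_empty] at hne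
        have hsub' : O ∩ B ⊆ {x} := by
          intro y hy
          by_contra hyx
          have hmem : y ∈ O ∩ (B \ {x}) := ⟨hy.1, hy.2, hyx⟩
          rw [hne] at hmem
          simpa using hmem
        have : O ∩ B = {x} :=
          subset_antisymm hsub' (by simpa using (⟨hxO, hxB.1⟩ : x ∈ O ∩ B))
        exact hcrowded x (this ▸ hO.inter hB)
      have hBsub : B ⊆ closure W := by
        intro y hy
        by_cases hyx : y = x
        · exact hyx ▸ (closure_mono hBW) hxcl
        · exact subset_closure (hBW ⟨hy, hyx⟩)
      have hBWsub : B ⊆ W := by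
        have h1 : B ⊆ interior (closure W) := interior_maximal hBsub hB
        exact h1.trans ((interior_mono hWcl).trans hWdef.symm.subset)
      exact hxB.2 (hBWsub hxB.1)
  -- the new topology is zerodimensional
  have hbasisσ : @TopologicalSpace.IsTopologicalBasis X (auxTop W)
      {s : Set X | @IsClopen X (auxTop W) s} := by
    refine @isTopologicalBasis_of_isOpen_of_nhds X (auxTop W) _ (fun u hu => hu.2) ?_
    rintro a u ha ⟨A, B, hA, hB, rfl⟩
    rcases ha with haA | haB
    · obtain ⟨c, hc, hac, hcA⟩ := hzd.exists_subset_of_mem_open haA hA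
      exact ⟨c, hclopen c hc, hac, fun y hy => Or.inl (hcA hy)⟩
    · obtain ⟨c, hc, hac, hcB⟩ := hzd.exists_subset_of_mem_open haB.1 hB
      have hopen : @IsOpen X (auxTop W) (c ∩ Wᶜ) := @IsOpen.inter X (auxTop W) _ _ (hto c hc.2) hWc
      have hclosed : @IsClosed X (auxTop W) (c ∩ Wᶜ) := @IsClosed.mk X (auxTop W) _ (by
        rw [compl_inter, compl_compl]
        exact @IsOpen.union X _ _ (auxTop W) (hto _ hc.1.isOpen_compl) (hto _ hWopen))
      have hcl2 : @IsClopen X (auxTop W) (c ∩ Wᶜ) := ⟨hclosed, hopen⟩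
      exact ⟨c ∩ Wᶜ, hcl2, ⟨hac, haB.2⟩, fun y hy => Or.inr ⟨hcB hy.1, hy.2⟩⟩
  have hσt : auxTop W = t := hmax (auxTop W) hle hcrowdσ hbasisσ
  have hWcOpen : IsOpen Wᶜ := hσt ▸ hWc
  have hWclosed : IsClosed W := ⟨hWcOpen⟩
  have hclU : closure U = W :=
    subset_antisymm (closure_minimal hUW hWclosed) interior_subset
  rw [hclU]; exact hWopen
end

section
/- In a maximal crowded zerodimensional space, every regular open set is clopen. -/
open Set TopologicalSpace

private lemma clopen_of_open_compl {X : Type*} [τ : TopologicalSpace X] {s : Set X}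
    (h1 : IsOpen s) (h2 : IsOpen sᶜ) : IsClopen s := ⟨isOpen_compl_iff.mp h2, h1⟩

/-- In a maximal crowded zerodimensional space, every regular open set is clopen. -/
theorem maximal_crowded_zerodim_regular_open_clopen {X : Type*} [t : TopologicalSpace X]
    (hcrowded : ∀ x : X, ¬ IsOpen ({x} : Set X))
    (hzd : TopologicalSpace.IsTopologicalBasis {s : Set X | IsClopen s})
    (hmax : ∀ σ : TopologicalSpace X, σ ≤ t →
      (∀ x : X, ¬ @IsOpen X σ {x}) →
      @TopologicalSpace.IsTopologicalBasis X σ {s : Set X | @IsClopen X σ s} →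
      σ = t) :
    ∀ U : Set X, U = interior (closure U) → IsClopen U := by
  intro U hU
  have hUopen : IsOpen U := hU ▸ isOpen_interior
  set G : Set (Set X) := insert U (insert Uᶜ {s : Set X | IsOpen s}) with hG
  -- the refined topology refines t
  have hle : TopologicalSpace.generateFrom G ≤ t := by
    rw [TopologicalSpace.le_def]
    intro s hs
    exact TopologicalSpace.GenerateOpen.basic s
      (mem_insert_of_mem _ (mem_insert_of_mem _ hs))
  -- U and Uᶜ are open in the refined topology
  have hUn : @IsOpen X (TopologicalSpace.generateFrom G) U :=
    TopologicalSpace.GenerateOpen.basic U (mem_insert _ _)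
  have hUcn : @IsOpen X (TopologicalSpace.generateFrom G) Uᶜ :=
    TopologicalSpace.GenerateOpen.basic Uᶜ (mem_insert_of_mem _ (mem_insert _ _))
  have hUclopenn : @IsClopen X (TopologicalSpace.generateFrom G) U :=
    @clopen_of_open_compl X (TopologicalSpace.generateFrom G) _ hUn hUcn
  have hUcclopenn : @IsClopen X (TopologicalSpace.generateFrom G) Uᶜ :=
    @clopen_of_open_compl X (TopologicalSpace.generateFrom G) _ hUcn
      ((compl_compl U).symm ▸ hUn)
  -- t-clopen sets are clopen in the refined topology
  have hmono : ∀ s : Set X, IsClopen s →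
      @IsClopen X (TopologicalSpace.generateFrom G) s := by
    intro s hs
    refine @clopen_of_open_compl X (TopologicalSpace.generateFrom G) _
      (TopologicalSpace.GenerateOpen.basic s
        (mem_insert_of_mem _ (mem_insert_of_mem _ hs.2)))
      (TopologicalSpace.GenerateOpen.basic sᶜ
        (mem_insert_of_mem _ (mem_insert_of_mem _ hs.1.isOpen_compl)))
  -- structure of open sets in the refined topology
  have key : ∀ s : Set X, TopologicalSpace.GenerateOpen G s → ∀ x ∈ s,
      ∃ V : Set X, IsOpen V ∧ x ∈ V ∧
        (x ∈ U → V ∩ U ⊆ s) ∧ (x ∉ U → V ∩ Uᶜ ⊆ s) := by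
    intro s hs
    induction hs with
    | basic s hsG =>
      intro x hx
      simp only [hG, Set.mem_insert_iff, Set.mem_setOf_eq] at hsG
      rcases hsG with rfl | rfl | hs
      · exact ⟨univ, isOpen_univ, mem_univ x, fun _ y hy => hy.2,
          fun hxU => absurd hx hxU⟩
      · exact ⟨univ, isOpen_univ, mem_univ x, fun hxU => absurd hxU hx,
          fun _ y hy => hy.2⟩
      · exact ⟨s, hs, hx, fun _ y hy => hy.1, fun _ y hy => hy.1⟩
    | univ =>
      intro x _
      exact ⟨univ, isOpen_univ, mem_univ x, fun _ _ _ => trivial, fun _ _ _ => trivial⟩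
    | inter s₁ s₂ h1 h2 ih1 ih2 =>
      intro x hx
      obtain ⟨V₁, hV₁, hxV₁, hA₁, hB₁⟩ := ih1 x hx.1
      obtain ⟨V₂, hV₂, hxV₂, hA₂, hB₂⟩ := ih2 x hx.2
      exact ⟨V₁ ∩ V₂, hV₁.inter hV₂, ⟨hxV₁, hxV₂⟩,
        fun hxU y hy => ⟨hA₁ hxU ⟨hy.1.1, hy.2⟩, hA₂ hxU ⟨hy.1.2, hy.2⟩⟩,
        fun hxU y hy => ⟨hB₁ hxU ⟨hy.1.1, hy.2⟩, hB₂ hxU ⟨hy.1.2, hy.2⟩⟩⟩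
    | sUnion S hS ih =>
      intro x hx
      obtain ⟨s, hsS, hxs⟩ := hx
      obtain ⟨V, hV, hxV, hA, hB⟩ := ih s hsS x hxs
      exact ⟨V, hV, hxV,
        fun h => (hA h).trans (subset_sUnion_of_mem hsS),
        fun h => (hB h).trans (subset_sUnion_of_mem hsS)⟩
  -- the refined topology is crowded
  have hcr : ∀ x : X, ¬ @IsOpen X (TopologicalSpace.generateFrom G) {x} := by
    intro x hx
    obtain ⟨V, hV, hxV, hA, hB⟩ := key {x} hx x rfl
    by_cases hxU : x ∈ U
    · have hVU : V ∩ U = {x} :=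
        Subset.antisymm (hA hxU) (by rintro y rfl; exact ⟨hxV, hxU⟩)
      exact hcrowded x (hVU ▸ hV.inter hUopen)
    · have hsub : V ∩ Uᶜ ⊆ {x} := hB hxU
      have hW : V ∩ (closure U)ᶜ ⊆ {x} := fun y hy =>
        hsub ⟨hy.1, fun hyU => hy.2 (subset_closure hyU)⟩
      by_cases hxc : x ∈ closure U
      · have hWempty : V ∩ (closure U)ᶜ = ∅ := by
          ext y
          simp only [mem_empty_iff_false, iff_false]
          intro hy
          have hyx := hW hy
          rw [mem_singleton_iff] at hyx
          subst hyx
          exact hy.2 hxc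
        have hVsub : V ⊆ closure U := by
          intro y hy
          by_contra h
          have hmem : y ∈ V ∩ (closure U)ᶜ := ⟨hy, h⟩
          rw [hWempty] at hmem
          exact hmem
        have hVU : V ⊆ U := hU ▸ interior_maximal hVsub hV
        exact hxU (hVU hxV)
      · have hWx : V ∩ (closure U)ᶜ = {x} :=
          Subset.antisymm hW (by rintro y rfl; exact ⟨hxV, hxc⟩)
        exact hcrowded x (hWx ▸ hV.inter isClosed_closure.isOpen_compl)
  -- the refined topology has a basis of clopen sets
  have hbasis : @TopologicalSpace.IsTopologicalBasis X (TopologicalSpace.generateFrom G)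
      {s : Set X | @IsClopen X (TopologicalSpace.generateFrom G) s} := by
    refine @TopologicalSpace.isTopologicalBasis_of_isOpen_of_nhds X
      (TopologicalSpace.generateFrom G) _ (fun s hs => hs.2) ?_
    intro x u hxu hu
    obtain ⟨V, hV, hxV, hA, hB⟩ := key u hu x hxu
    obtain ⟨b, hb, hxb, hbV⟩ := hzd.exists_subset_of_mem_open hxV hV
    by_cases hxU : x ∈ U
    · refine ⟨b ∩ U, @IsClopen.inter X (TopologicalSpace.generateFrom G) _ _
        (hmono b hb) hUclopenn, ⟨hxb, hxU⟩, ?_⟩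
      exact fun y hy => hA hxU ⟨hbV hy.1, hy.2⟩
    · refine ⟨b ∩ Uᶜ, @IsClopen.inter X (TopologicalSpace.generateFrom G) _ _
        (hmono b hb) hUcclopenn, ⟨hxb, hxU⟩, ?_⟩
      exact fun y hy => hB hxU ⟨hbV hy.1, hy.2⟩
  have ht : TopologicalSpace.generateFrom G = t := hmax _ hle hcr hbasis
  have hUc : IsOpen Uᶜ := ht ▸ hUcn
  exact ⟨⟨hUc⟩, hUopen⟩
end

section
/- If p is a lonely point of a subspace Y of X and Y is a weak P-set in X, then p is a lonely point of X. -/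
/-- A set is discrete if every one of its points has a neighborhood meeting it exactly there. -/
def IsDiscreteSet {X : Type*} [TopologicalSpace X] (D : Set X) : Prop :=
  ∀ x ∈ D, ∃ U : Set X, IsOpen U ∧ U ∩ D = {x}

/-- A lonely point: (i) not a limit point of a countable discrete set;
(ii) a limit point of a countable crowded set; (iii) uniquely accessible. -/
def IsLonely {X : Type*} [TopologicalSpace X] (p : X) : Prop :=
  (∀ D : Set X, D.Countable → IsDiscreteSet D → p ∉ closure (D \ {p})) ∧
  (∃ S : Set X, S.Countable ∧ (∀ x ∈ S, x ∈ closure (S \ {x})) ∧ p ∈ closure (S \ {p})) ∧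
  (∀ A B : Set X, A.Countable → B.Countable →
    p ∈ closure (A \ {p}) → p ∈ closure (B \ {p}) → p ∈ closure ((A ∩ B) \ {p}))

/-- If `p` is lonely in a weak P-set `Y ⊆ X`, then `p` is lonely in `X`. -/
theorem lonely_of_lonely_in_weak_P_set {X : Type*} [TopologicalSpace X]
    (Y : Set X) (p : Y) (hl : IsLonely p)
    (hwP : ∀ C : Set X, C.Countable → Disjoint C Y → Disjoint (closure C) Y) :
    IsLonely (p : X) := by
  obtain ⟨h1, h2, h3⟩ := hl
  have himg : ∀ (A : Set X),
      (Subtype.val '' (Subtype.val ⁻¹' A \ {p}) : Set X) = (A ∩ Y) \ {(p : X)} := by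
    intro A
    ext x
    constructor
    · rintro ⟨⟨y, hy⟩, ⟨hyA, hyp⟩, rfl⟩
      exact ⟨⟨hyA, hy⟩, by simpa [Subtype.ext_iff] using hyp⟩
    · rintro ⟨⟨hxA, hxY⟩, hxp⟩
      exact ⟨⟨x, hxY⟩, ⟨hxA, by simpa [Subtype.ext_iff] using hxp⟩, rfl⟩
  -- Key transfer lemma: closure in X pulls back to closure in Y
  have key : ∀ A : Set X, A.Countable → (p : X) ∈ closure (A \ {(p : X)}) →
      p ∈ closure (Subtype.val ⁻¹' A \ {p}) := by
    intro A hA hp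
    have hsub : A \ {(p : X)} ⊆ ((A ∩ Y) \ {(p : X)}) ∪ (A \ Y) := by
      intro x hx
      by_cases hxY : x ∈ Y
      · exact Or.inl ⟨⟨hx.1, hxY⟩, hx.2⟩
      · exact Or.inr ⟨hx.1, hxY⟩
    have hp2 := closure_mono hsub hp
    rw [closure_union] at hp2
    have hnot : (p : X) ∉ closure (A \ Y) := fun h =>
      Set.disjoint_left.mp
        (hwP (A \ Y) (hA.mono Set.diff_subset) Set.disjoint_sdiff_left) h p.2
    have hp3 : (p : X) ∈ closure ((A ∩ Y) \ {(p : X)}) := hp2.resolve_right hnot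
    rw [closure_subtype, himg A]
    exact hp3
  -- push closures from Y to X
  have push : ∀ (s : Set Y) (q : Y), q ∈ closure s →
      (q : X) ∈ closure (Subtype.val '' s) := fun s q hq => (closure_subtype.mp hq)
  refine ⟨?_, ?_, ?_⟩
  · -- (i)
    intro D hD hdisc hp
    refine h1 (Subtype.val ⁻¹' D) (hD.preimage Subtype.coe_injective) ?_ (key D hD hp)
    intro x hx
    obtain ⟨U, hUo, hUD⟩ := hdisc x hx
    refine ⟨Subtype.val ⁻¹' U, hUo.preimage continuous_subtype_val, ?_⟩
    ext y
    simp only [Set.mem_inter_iff, Set.mem_preimage, Set.mem_singleton_iff]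
    constructor
    · rintro ⟨hyU, hyD⟩
      have : (y : X) ∈ U ∩ D := ⟨hyU, hyD⟩
      rw [hUD] at this
      exact Subtype.ext this
    · rintro rfl
      have hm : (y : X) ∈ U ∩ D := by rw [hUD]; rfl
      exact ⟨hm.1, hm.2⟩
  · -- (ii)
    obtain ⟨S, hSc, hScr, hSp⟩ := h2
    refine ⟨Subtype.val '' S, hSc.image _, ?_, ?_⟩
    · rintro x ⟨y, hy, rfl⟩
      have := push _ _ (hScr y hy)
      rwa [Set.image_diff Subtype.coe_injective, Set.image_singleton] at this
    · have := push _ _ hSp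
      rwa [Set.image_diff Subtype.coe_injective, Set.image_singleton] at this
  · -- (iii)
    intro A B hA hB hpA hpB
    have h := h3 (Subtype.val ⁻¹' A) (Subtype.val ⁻¹' B)
      (hA.preimage Subtype.coe_injective) (hB.preimage Subtype.coe_injective)
      (key A hA hpA) (key B hB hpB)
    have h' := push _ _ h
    refine closure_mono ?_ h'
    rintro x ⟨⟨y, hy⟩, ⟨⟨hyA, hyB⟩, hyp⟩, rfl⟩
    exact ⟨⟨hyA, hyB⟩, by simpa [Subtype.ext_iff] using hyp⟩
end

section
/- In an open hereditarily irresolvable space, every discrete subset is nowhere dense. -/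
/-- In a (crowded) open hereditarily irresolvable space, discrete sets are nowhere dense. -/
theorem discrete_nowhere_dense_in_OHI {X : Type*} [TopologicalSpace X]
    (hcrowded : ∀ x : X, ¬ IsOpen ({x} : Set X))
    (hOHI : ∀ U : Set X, IsOpen U → U.Nonempty →
      ¬ ∃ D₀ D₁ : Set X, D₀ ⊆ U ∧ D₁ ⊆ U ∧ Disjoint D₀ D₁ ∧ U ⊆ closure D₀ ∧ U ⊆ closure D₁)
    (D : Set X) (hD : IsDiscreteSet D) :
    interior (closure D) = ∅ := by
  by_contra h
  set V := interior (closure D) with hV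
  have hVopen : IsOpen V := isOpen_interior
  have hVne : V.Nonempty := Set.nonempty_iff_ne_empty.mpr h
  apply hOHI V hVopen hVne
  refine ⟨D ∩ V, V \ D, Set.inter_subset_right, Set.diff_subset, ?_, ?_, ?_⟩
  · exact Set.disjoint_left.mpr fun a ha hb => hb.2 ha.1
  · -- V ⊆ closure (D ∩ V)
    intro x hxV
    rw [mem_closure_iff]
    intro W hW hxW
    have hWV : IsOpen (W ∩ V) := hW.inter hVopen
    have hxWV : x ∈ W ∩ V := ⟨hxW, hxV⟩
    have hxcl : x ∈ closure D := interior_subset hxV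
    rw [mem_closure_iff] at hxcl
    obtain ⟨y, hyWV, hyD⟩ := hxcl (W ∩ V) hWV hxWV
    exact ⟨y, hyWV.1, hyD, hyWV.2⟩
  · -- V ⊆ closure (V \ D)
    intro x hxV
    rw [mem_closure_iff]
    intro W hW hxW
    by_cases hxD : x ∈ D
    · obtain ⟨U, hUopen, hUD⟩ := hD x hxD
      have hxU : x ∈ U := by
        have : x ∈ U ∩ D := hUD ▸ rfl
        exact this.1
      have hopen : IsOpen (W ∩ V ∩ U) := (hW.inter hVopen).inter hUopen
      have hxmem : x ∈ W ∩ V ∩ U := ⟨⟨hxW, hxV⟩, hxU⟩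
      have hne : W ∩ V ∩ U ≠ {x} := by
        intro he
        exact hcrowded x (he ▸ hopen)
      obtain ⟨y, hyWVU, hyx⟩ : ∃ y ∈ W ∩ V ∩ U, y ≠ x := by
        by_contra hc
        push_neg at hc
        apply hne
        apply Set.eq_singleton_iff_unique_mem.mpr ⟨hxmem, hc⟩
      refine ⟨y, hyWVU.1.1, hyWVU.1.2, fun hyD => hyx ?_⟩
      have : y ∈ U ∩ D := ⟨hyWVU.2, hyD⟩
      rw [hUD] at this
      exact this
    · exact ⟨x, hxW, hxV, hxD⟩
end

section
/- Suppose p ∈ ω* is lonely and p ∈ cl(S) \ S for a countable crowded set S ⊆ ω*. Then p is not a limit point of any nowhere dense subset of S, and p is a weak P-point of cl(S) \ S. -/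
abbrev OmegaStar : Type := {x : StoneCech ℕ // x ∉ Set.range (stoneCechUnit : ℕ → StoneCech ℕ)}

/-- If p ∈ ω* is lonely and p ∈ cl(S) \ S for a countable crowded S, then p is not a limit
point of any nowhere dense subset of S, and p is a weak P-point of cl(S) \ S. -/
theorem lonely_point_properties (p : OmegaStar) (hl : IsLonely p)
    (S : Set OmegaStar) (hS : S.Countable)
    (hcr : ∀ x ∈ S, x ∈ closure (S \ {x}))
    (hpS : p ∈ closure S) (hpnS : p ∉ S) :
    (∀ N : Set OmegaStar, N ⊆ S →
      (∀ U : Set OmegaStar, IsOpen U → (U ∩ S).Nonempty → ¬ (U ∩ S ⊆ closure N)) →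
      p ∉ closure (N \ {p})) ∧
    (∀ C : Set OmegaStar, C ⊆ closure S \ S → C.Countable → p ∉ closure (C \ {p})) := by
  obtain ⟨h1, h2, h3⟩ := hl
  constructor
  · -- Part 1: not a limit point of any nowhere dense subset of S
    intro N hNS hnwd hp
    set D : Set OmegaStar := S \ closure N with hDdef
    have hNc : N.Countable := hS.mono hNS
    have hDc : D.Countable := hS.mono Set.diff_subset
    -- p is in the closure of D, since D is dense in S and p ∈ closure S
    have hpD : p ∈ closure (D \ {p}) := by
      have hDp : D \ {p} = D :=
        Set.diff_singleton_eq_self (fun h => hpnS h.1)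
      rw [hDp, mem_closure_iff]
      intro U hU hpU
      have hUS : (U ∩ S).Nonempty := (mem_closure_iff.mp hpS) U hU hpU
      have hns := hnwd U hU hUS
      rw [Set.not_subset] at hns
      obtain ⟨y, ⟨hyU, hyS⟩, hyN⟩ := hns
      exact ⟨y, hyU, hyS, hyN⟩
    have hkey := h3 N D hNc hDc hp hpD
    have hempty : (N ∩ D) \ {p} = (∅ : Set OmegaStar) := by
      ext x
      simp only [Set.mem_diff, Set.mem_inter_iff, Set.mem_empty_iff_false, iff_false]
      rintro ⟨⟨hxN, _, hxD⟩, _⟩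
      exact hxD (subset_closure hxN)
    rw [hempty, closure_empty] at hkey
    exact hkey
  · -- Part 2: weak P-point of closure S \ S
    intro C hC hCc hp
    have hpS' : p ∈ closure (S \ {p}) := by
      rw [Set.diff_singleton_eq_self hpnS]; exact hpS
    have hkey := h3 C S hCc hS hp hpS'
    have hempty : (C ∩ S) \ {p} = (∅ : Set OmegaStar) := by
      ext x
      simp only [Set.mem_diff, Set.mem_inter_iff, Set.mem_empty_iff_false, iff_false]
      rintro ⟨⟨hxC, hxS⟩, _⟩
      exact (hC hxC).2 hxS
    rw [hempty, closure_empty] at hkey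
    exact hkey
end

section
/- There exists an ideal I on ω extending the ideal FIN of finite sets such that the quotient Boolean algebra P(ω)/I has hereditary independence 𝔠: for every nonzero b ∈ P(ω)/I and every family A of fewer than 𝔠 elements strictly between 0 and b, there exists c with 0 < c < b such that a ∧ c ≠ 0 ≠ a \ c for all a ∈ A. -/
/-!
Let `d` be a dense sequence in the Cantor cube `Set ℕ → Bool` of weight `𝔠` (it is separable:
Hausdorff's traces `X ↦ [X ∩ s ∈ 𝒮]`, for finite `s` and `𝒮`, are dense) and let `I` consist of
the sets `A ⊆ ℕ` whose image under `d` is nowhere dense. If `A ∉ I`, the closure of `d '' A`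
contains a basic open set, which depends on finitely many coordinates only; for any other
coordinate `γ` both halves `{n ∈ A | d n γ = ε}` stay outside `I`. Fewer than `𝔠` sets depend on
fewer than `𝔠` coordinates, so one coordinate `γ` splits all of them at once, and
`c = {n ∈ b | d n γ = true}` is the required element.
-/

open Set Cardinal TopologicalSpace

universe u

theorem IsNowhereDense.union {X : Type*} [TopologicalSpace X] {s t : Set X}
    (hs : IsNowhereDense s) (ht : IsNowhereDense t) : IsNowhereDense (s ∪ t) := by
  rwa [IsNowhereDense, closure_union,
    interior_union_isClosed_of_interior_empty isClosed_closure ht]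

theorem dense_of_forall_finset_exists_eqOn {ι Y : Type*} [TopologicalSpace Y] {D : Set (ι → Y)}
    (h : ∀ (G : Finset ι) (x : ι → Y), ∃ y ∈ D, EqOn y x G) : Dense D := by
  refine dense_iff_inter_open.2 fun U hU ⟨x, hx⟩ => ?_
  obtain ⟨G, u, hu, hGu⟩ := isOpen_pi_iff.1 hU x hx
  obtain ⟨y, hyD, hyx⟩ := h G x
  exact ⟨y, hGu fun i hi => (hyx hi).symm ▸ (hu i hi).2, hyD⟩

theorem exists_forall_notMem_finset_of_mk_lt {α ι : Type u} (G : α → Finset ι)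
    (hα : #α < #ι) (hι : ℵ₀ < #ι) : ∃ γ, ∀ a, γ ∉ G a := by
  have hU : #(⋃ a, (G a : Set ι)) < #ι :=
    (mk_iUnion_le _).trans_lt <| mul_lt_of_lt hι.le hα <|
      (ciSup_le' fun a => (G a).finite_toSet.lt_aleph0.le).trans_lt hι
  obtain ⟨γ, hγ⟩ : ∃ γ, γ ∉ ⋃ a, (G a : Set ι) := by
    by_contra! h
    rw [eq_univ_of_forall h, mk_univ] at hU
    exact hU.false
  exact ⟨γ, fun a ha => hγ (mem_iUnion.2 ⟨a, ha⟩)⟩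

section Traces

open scoped Classical

variable {α : Type*}

noncomputable def traceIndicator (p : Finset α × Finset (Finset α)) (X : Set α) : Bool :=
  decide (p.1.filter (· ∈ X) ∈ p.2)

theorem exists_finset_injOn_filter_mem (F : Finset (Set α)) :
    ∃ s : Finset α, InjOn (fun X => s.filter (· ∈ X)) (F : Set (Set α)) := by
  cases isEmpty_or_nonempty α
  · exact ⟨∅, fun X _ Y _ _ => Subsingleton.elim X Y⟩
  choose! n hn using fun (X Y : Set α) (h : X ≠ Y) => not_forall.1 (mt Set.ext h)
  refine ⟨(F ×ˢ F).image fun p => n p.1 p.2,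
    fun X hX Y hY hXY => by_contra fun hne => hn X Y hne ?_⟩
  have hmem : n X Y ∈ (F ×ˢ F).image fun p => n p.1 p.2 :=
    Finset.mem_image_of_mem (fun p => n p.1 p.2) (a := (X, Y)) (Finset.mem_product.2 ⟨hX, hY⟩)
  simpa [hmem] using Finset.ext_iff.1 hXY (n X Y)

theorem exists_traceIndicator_eqOn (F : Finset (Set α)) (x : Set α → Bool) :
    ∃ p, EqOn (traceIndicator p) x F := by
  obtain ⟨s, hs⟩ := exists_finset_injOn_filter_mem F
  refine ⟨(s, (F.filter (x · = true)).image fun X => s.filter (· ∈ X)), fun X hX => ?_⟩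
  have hmem : (∃ Y, (Y ∈ F ∧ x Y = true) ∧ s.filter (· ∈ Y) = s.filter (· ∈ X)) ↔ x X = true :=
    ⟨fun ⟨Y, ⟨hY, hxY⟩, hYX⟩ => hs hY hX hYX ▸ hxY, fun h => ⟨X, ⟨hX, h⟩, rfl⟩⟩
  simp only [traceIndicator, Finset.mem_image, Finset.mem_filter, hmem, Bool.decide_eq_true]

instance [Countable α] : SeparableSpace (Set α → Bool) :=
  ⟨⟨range traceIndicator, countable_range _, dense_of_forall_finset_exists_eqOn fun G x =>
    let ⟨p, hp⟩ := exists_traceIndicator_eqOn G x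
    ⟨_, mem_range_self p, hp⟩⟩⟩

end Traces

section NowhereDenseIdeal

variable {N X : Type*} [TopologicalSpace X] {d : N → X} {A B : Set N}

def nowhereDenseIdeal (d : N → X) : Set (Set N) := {A | IsNowhereDense (d '' A)}

theorem mem_nowhereDenseIdeal_of_subset (hA : A ∈ nowhereDenseIdeal d) (hBA : B ⊆ A) :
    B ∈ nowhereDenseIdeal d :=
  IsNowhereDense.mono (image_mono hBA) hA

theorem union_mem_nowhereDenseIdeal (hA : A ∈ nowhereDenseIdeal d)
    (hB : B ∈ nowhereDenseIdeal d) : A ∪ B ∈ nowhereDenseIdeal d := by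
  rw [nowhereDenseIdeal, mem_ofPred_eq, image_union]
  exact hA.union hB

theorem empty_mem_nowhereDenseIdeal : ∅ ∈ nowhereDenseIdeal d := by
  rw [nowhereDenseIdeal, mem_ofPred_eq, image_empty]
  exact isNowhereDense_empty

theorem univ_notMem_nowhereDenseIdeal [Nonempty X] (hd : DenseRange d) :
    Set.univ ∉ nowhereDenseIdeal d := by
  simp [nowhereDenseIdeal, IsNowhereDense, hd.closure_range]

end NowhereDenseIdeal

section CantorCube

variable {ι N : Type*}

theorem exists_finset_forall_not_isNowhereDense_inter {S : Set (ι → Bool)}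
    (hS : ¬IsNowhereDense S) :
    ∃ G : Finset ι, ∀ γ ∉ G, ∀ ε, ¬IsNowhereDense (S ∩ {y | y γ = ε}) := by
  classical
  obtain ⟨x, hx⟩ := nonempty_iff_ne_empty.2 hS
  obtain ⟨G, u, hu, hGu⟩ := isOpen_pi_iff.1 isOpen_interior x hx
  refine ⟨G, fun γ hγ ε hnd => ?_⟩
  have hslice : IsOpen {y : ι → Bool | y γ = ε} :=
    (continuous_apply (A := fun _ => Bool) γ).isOpen_preimage {ε} (isOpen_discrete _)
  set V := (G : Set ι).pi u ∩ {y | y γ = ε}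
  have hV_open : IsOpen V := (isOpen_set_pi G.finite_toSet fun i hi => (hu i hi).1).inter hslice
  have hV_ne : V.Nonempty := by
    refine ⟨Function.update x γ ε, fun i hi => ?_, by simp⟩
    rw [Function.update_of_ne (ne_of_mem_of_not_mem hi hγ)]
    exact (hu i hi).2
  have hV_sub : V ⊆ closure (S ∩ {y | y γ = ε}) :=
    calc V ⊆ {y | y γ = ε} ∩ closure S := fun y hy => ⟨hy.2, interior_subset (hGu hy.1)⟩
      _ ⊆ closure ({y | y γ = ε} ∩ S) := hslice.inter_closure
      _ = closure (S ∩ {y | y γ = ε}) := by rw [inter_comm]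
  exact hV_ne.ne_empty (eq_empty_of_subset_empty (hnd ▸ interior_maximal hV_sub hV_open))

variable {d : N → ι → Bool}

theorem exists_finset_forall_inter_notMem_nowhereDenseIdeal {A : Set N}
    (hA : A ∉ nowhereDenseIdeal d) :
    ∃ G : Finset ι, ∀ γ ∉ G, ∀ ε, A ∩ d ⁻¹' {y | y γ = ε} ∉ nowhereDenseIdeal d := by
  simpa only [nowhereDenseIdeal, mem_ofPred_eq, image_inter_preimage] using
    exists_finset_forall_not_isNowhereDense_inter hA

theorem singleton_mem_nowhereDenseIdeal [Infinite ι] (n : N) : {n} ∈ nowhereDenseIdeal d := by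
  by_contra h
  obtain ⟨G, hG⟩ := exists_finset_forall_inter_notMem_nowhereDenseIdeal h
  obtain ⟨γ, hγ⟩ := Infinite.exists_notMem_finset G
  refine hG γ hγ (!d n γ) ?_
  rw [singleton_inter_eq_empty.2 (by simp)]
  exact empty_mem_nowhereDenseIdeal

theorem Set.Finite.mem_nowhereDenseIdeal [Infinite ι] {A : Set N} (hA : A.Finite) :
    A ∈ nowhereDenseIdeal d := by
  induction A, hA using Set.Finite.induction_on with
  | empty => exact empty_mem_nowhereDenseIdeal
  | insert _ _ ih =>
    rw [insert_eq]
    exact union_mem_nowhereDenseIdeal (singleton_mem_nowhereDenseIdeal _) ih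

end CantorCube

theorem exists_forall_inter_notMem_nowhereDenseIdeal {α ι : Type u} {N : Type*}
    {d : N → ι → Bool}
    (S : α → Set N) (hS : ∀ a, S a ∉ nowhereDenseIdeal d) (hα : #α < #ι) (hι : ℵ₀ < #ι) :
    ∃ γ, ∀ a ε, S a ∩ d ⁻¹' {y | y γ = ε} ∉ nowhereDenseIdeal d := by
  choose G hG using fun a => exists_finset_forall_inter_notMem_nowhereDenseIdeal (hS a)
  obtain ⟨γ, hγ⟩ := exists_forall_notMem_finset_of_mk_lt G hα hι
  exact ⟨γ, fun a => hG a γ (hγ a)⟩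

/-- There is an ideal I on ω extending FIN such that P(ω)/I has hereditary independence 𝔠. -/
theorem exists_ideal_hereditary_independence :
    ∃ I : Set (Set ℕ),
      (∀ A ∈ I, ∀ B : Set ℕ, B ⊆ A → B ∈ I) ∧
      (∀ A ∈ I, ∀ B ∈ I, A ∪ B ∈ I) ∧
      (∀ A : Set ℕ, A.Finite → A ∈ I) ∧
      (Set.univ : Set ℕ) ∉ I ∧
      (∀ b : Set ℕ, b ∉ I →
        ∀ 𝒜 : Set (Set ℕ), Cardinal.mk 𝒜 < Cardinal.continuum →
        (∀ a ∈ 𝒜, a ∉ I ∧ a \ b ∈ I ∧ b \ a ∉ I) →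
        ∃ c : Set ℕ, c ∉ I ∧ c \ b ∈ I ∧ b \ c ∉ I ∧
          ∀ a ∈ 𝒜, a ∩ c ∉ I ∧ a \ c ∉ I) := by
  obtain ⟨d, hd⟩ := exists_dense_seq (Set ℕ → Bool)
  refine ⟨nowhereDenseIdeal d, fun A hA B hBA => mem_nowhereDenseIdeal_of_subset hA hBA,
    fun A hA B hB => union_mem_nowhereDenseIdeal hA hB, fun A hA => hA.mem_nowhereDenseIdeal,
    univ_notMem_nowhereDenseIdeal hd, fun b hb 𝒜 h𝒜 hb𝒜 => ?_⟩
  have hab : ∀ a ∈ 𝒜, a ∩ b ∉ nowhereDenseIdeal d := fun a ha h =>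
    (hb𝒜 a ha).1 (inter_union_sdiff a b ▸ union_mem_nowhereDenseIdeal h (hb𝒜 a ha).2.1)
  obtain ⟨γ, hγ⟩ := exists_forall_inter_notMem_nowhereDenseIdeal
    (fun o : Option 𝒜 => o.elim b fun a => a ∩ b) (by rintro (_ | ⟨a, ha⟩); exacts [hb, hab a ha])
    (by rw [mk_option, mk_set_nat]
        exact add_lt_of_lt aleph0_le_continuum h𝒜 (one_lt_aleph0.trans aleph0_lt_continuum))
    (mk_set_nat ▸ aleph0_lt_continuum)
  set c := b ∩ d ⁻¹' {y | y γ = true}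
  have hdiff_c : ∀ s, s ∩ d ⁻¹' {y | y γ = false} ⊆ s \ c :=
    fun s n ⟨hn, hf⟩ => ⟨hn, fun ht => Bool.false_ne_true (hf.symm.trans ht.2)⟩
  refine ⟨c, hγ none true, ?_,
    fun h => hγ none false (mem_nowhereDenseIdeal_of_subset h (hdiff_c b)), fun a ha => ⟨?_, ?_⟩⟩
  · rw [sdiff_eq_empty.2 inter_subset_left]
    exact empty_mem_nowhereDenseIdeal
  · rw [← inter_assoc]
    exact hγ (some ⟨a, ha⟩) true
  · exact fun h => hγ (some ⟨a, ha⟩) false <| mem_nowhereDenseIdeal_of_subset h <|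
      (inter_subset_inter_left _ inter_subset_left).trans (hdiff_c a)
end

section
/- There exists a crowded, Hausdorff, zerodimensional topology τ on ω together with a closed filter F on (ω, τ) which is strongly remote: for every A ⊆ ω with empty τ-interior, there is F' ∈ F disjoint from A. -/
/-!
Enumerate `Set ℕ` in order type `𝔠` and build the topology in `𝔠` stages, each adding a set and
its complement to a clopen subbasis. Fresh sets come from Hausdorff's independent family
`indep σ`. The invariant (`Good`) is that every nonempty finite combination of the literals
added so far and of unused independent sets is infinite, and every consistent such combination
with nonempty literal part is nonempty. At the stage of `A`: if some combination lies inside `A`,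
it is made open; if `A` is infinitely dense in some combination `w`, then `indep x ∩ A ∩ w` is
made open for a fresh `x`; otherwise `indep x ∪ A` is made open and its complement joins the
filter. A set with empty interior can only fall into the last case, so the filter avoids it; the
invariant gives the filter the finite intersection property and makes the space crowded.
-/

open Set

noncomputable section

namespace StronglyRemote

def code : ℕ ≃ Finset ℕ × Finset (Finset ℕ) := (Denumerable.eqv _).symm

open Classical in
def indep (σ : Set ℕ) : Set ℕ := {n | (code n).1.filter (· ∈ σ) ∈ (code n).2}

def indepLit (q : Set ℕ × Bool) : Set ℕ := if q.2 then indep q.1 else (indep q.1)ᶜ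

def Consistent {ι : Type*} (Q : Finset (ι × Bool)) : Prop := ∀ i, (i, true) ∈ Q → (i, false) ∉ Q

open Classical in
theorem code_symm_mem_iInter_indepLit {Q : Finset (Set ℕ × Bool)} (hQ : Consistent Q)
    {F : Finset ℕ} (hF : ∀ q ∈ Q, ∀ q' ∈ Q, q.1 ≠ q'.1 → ∃ n ∈ F, n ∈ symmDiff q.1 q'.1) :
    code.symm (F, (Q.filter (·.2)).image fun q => F.filter (· ∈ q.1)) ∈ ⋂ q ∈ Q, indepLit q := by
  refine mem_iInter₂.2 fun ⟨σ, b⟩ hq => ?_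
  cases b
  · simp only [indepLit, indep, Bool.false_eq_true, if_false, mem_compl_iff, mem_ofPred_eq,
      Equiv.apply_symm_apply, Finset.mem_image, Finset.mem_filter, not_exists, not_and]
    rintro ⟨τ, b⟩ ⟨hτ, rfl⟩ heq
    obtain ⟨n, hnF, hn⟩ := hF _ hτ _ hq fun (h : τ = σ) => hQ σ (h ▸ hτ) hq
    have := Finset.ext_iff.1 heq n
    simp only [Finset.mem_filter, hnF, true_and] at this
    rcases Set.mem_symmDiff.1 hn with ⟨h1, h2⟩ | ⟨h1, h2⟩
    exacts [h2 (this.1 h1), h2 (this.2 h1)]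
  · simp only [indepLit, indep, if_true, mem_ofPred_eq, Equiv.apply_symm_apply]
    exact Finset.mem_image.2 ⟨(σ, true), Finset.mem_filter.2 ⟨hq, rfl⟩, rfl⟩

theorem infinite_iInter_indepLit {Q : Finset (Set ℕ × Bool)} (hQ : Consistent Q) :
    (⋂ q ∈ Q, indepLit q).Infinite := by
  classical
  have : ∀ q q' : Set ℕ × Bool, ∃ n, q.1 ≠ q'.1 → n ∈ symmDiff q.1 q'.1 := fun q q' => by
    by_cases h : q.1 = q'.1
    · exact ⟨0, fun h' => (h' h).elim⟩
    · obtain ⟨n, hn⟩ := symmDiff_nonempty.2 h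
      exact ⟨n, fun _ => hn⟩
  choose wit hwit using this
  let F₀ := (Q ×ˢ Q).image fun p => wit p.1 p.2
  let M := F₀.sup id + 1
  have hF₀ : ∀ m ∈ F₀, m < M := fun m hm => Nat.lt_succ_of_le (Finset.le_sup (f := id) hm)
  let F : ℕ → Finset ℕ := fun k => insert (M + k) F₀
  have hinj : Function.Injective fun k => code.symm (F k, (Q.filter (·.2)).image fun q =>
      (F k).filter (· ∈ q.1)) := by
    intro k j hkj
    have hF : F k = F j := congrArg Prod.fst (code.symm.injective hkj)
    have : M + k ∈ F j := hF ▸ Finset.mem_insert_self _ _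
    rcases Finset.mem_insert.1 this with h | h
    · omega
    · exact absurd (hF₀ _ h) (by omega)
  refine infinite_of_injective_forall_mem hinj fun k =>
    code_symm_mem_iInter_indepLit hQ fun q hq q' hq' h => ⟨wit q q', ?_, hwit q q' h⟩
  exact Finset.mem_insert_of_mem (Finset.mem_image_of_mem _ (Finset.mk_mem_product hq hq'))

/-- Indices containing `0` are reserved for the separating sets `sepSet`. -/
def free : Set (Set ℕ) := {σ | 0 ∉ σ}

def sepIdx (p : ℕ × ℕ) : Set ℕ := {0, Nat.pair p.1 p.2 + 1}

def sepSet (n m : ℕ) : Set ℕ := insert n (indep (sepIdx (n, m)) \ {m})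

def baseLit (p : (ℕ × ℕ) × Bool) : Set ℕ :=
  if p.2 then sepSet p.1.1 p.1.2 else (sepSet p.1.1 p.1.2)ᶜ

def baseLits : Set (Set ℕ) := range baseLit

theorem mem_sepSet_self (n m : ℕ) : n ∈ sepSet n m := mem_insert n _

theorem notMem_sepSet {n m : ℕ} (h : n ≠ m) : m ∉ sepSet n m := by
  simp [sepSet, Ne.symm h]

theorem sepIdx_notMem_free (p : ℕ × ℕ) : sepIdx p ∉ free := by simp [sepIdx, free]

theorem sepIdx_injective : Function.Injective sepIdx := by
  intro p p' h
  have : Nat.pair p.1 p.2 + 1 ∈ sepIdx p' := h ▸ by simp [sepIdx]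
  simpa [sepIdx, Prod.ext_iff] using this

theorem compl_baseLit (p : (ℕ × ℕ) × Bool) : (baseLit p)ᶜ = baseLit (p.1, !p.2) := by
  obtain ⟨_, _ | _⟩ := p <;> simp [baseLit]

theorem compl_mem_baseLits {ℓ : Set ℕ} (h : ℓ ∈ baseLits) : ℓᶜ ∈ baseLits := by
  obtain ⟨p, rfl⟩ := h
  exact ⟨_, (compl_baseLit p).symm⟩

theorem sepSet_mem_baseLits (n m : ℕ) : sepSet n m ∈ baseLits := ⟨((n, m), true), rfl⟩

theorem mem_baseLit_iff {n m y : ℕ} (b : Bool) (hn : y ≠ n) (hm : y ≠ m) :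
    y ∈ baseLit ((n, m), b) ↔ y ∈ indepLit (sepIdx (n, m), b) := by
  cases b <;> simp [baseLit, indepLit, sepSet, hn, hm]

theorem Consistent.union {ι : Type*} [DecidableEq ι] {Q Q' : Finset (ι × Bool)} (hQ : Consistent Q)
    (hQ' : Consistent Q') (h : ∀ q ∈ Q, ∀ q' ∈ Q', q.1 ≠ q'.1) : Consistent (Q ∪ Q') := by
  intro σ ht hf
  rcases Finset.mem_union.1 ht with ht | ht <;> rcases Finset.mem_union.1 hf with hf | hf
  · exact hQ σ ht hf
  · exact h _ ht _ hf rfl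
  · exact h _ hf _ ht rfl
  · exact hQ' σ ht hf

theorem Consistent.image {ι κ : Type*} [DecidableEq κ] {f : ι → κ} (hf : Function.Injective f)
    {L : Finset (ι × Bool)} (hL : Consistent L) : Consistent (L.image (Prod.map f id)) := by
  intro k ht hf'
  obtain ⟨⟨i, b⟩, hi, hib⟩ := Finset.mem_image.1 ht
  obtain ⟨⟨i', b'⟩, hi', hib'⟩ := Finset.mem_image.1 hf'
  simp only [Prod.map, id, Prod.mk.injEq] at hib hib'
  obtain ⟨hi1, rfl⟩ := hib
  obtain ⟨hi2, rfl⟩ := hib'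
  exact hL i hi (hf (hi2.trans hi1.symm) ▸ hi')

/-- Off a finite set, base literals are literals of the reserved indices `sepIdx p`, so a
consistent combination of them with free indices is still infinite. -/
theorem baseLit_inter_empty_or_infinite (L : Finset ((ℕ × ℕ) × Bool))
    {Q : Finset (Set ℕ × Bool)} (hQ : Consistent Q) (hQfree : ∀ q ∈ Q, q.1 ∈ free) :
    (⋂ p ∈ L, baseLit p) = ∅ ∨ ((⋂ p ∈ L, baseLit p) ∩ ⋂ q ∈ Q, indepLit q).Infinite := by
  classical
  by_cases hL : Consistent L
  swap
  · simp only [Consistent, not_forall, not_not] at hL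
    obtain ⟨p, hpt, hpf⟩ := hL
    refine Or.inl (eq_empty_of_subset_empty fun y hy => ?_)
    have h1 := mem_iInter₂.1 hy _ hpt
    have h2 := mem_iInter₂.1 hy _ hpf
    simp only [baseLit, if_true, Bool.false_eq_true, if_false] at h1 h2
    exact h2 h1
  let Q' := Q ∪ L.image (Prod.map sepIdx id)
  have hQ' : Consistent Q' := hQ.union (hL.image sepIdx_injective) fun q hq q' hq' e => by
    obtain ⟨p, -, rfl⟩ := Finset.mem_image.1 hq'
    have e : q.1 = sepIdx p.1 := e
    exact sepIdx_notMem_free p.1 (e ▸ hQfree q hq)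
  let J : Finset ℕ := L.biUnion fun p => {p.1.1, p.1.2}
  refine Or.inr (((infinite_iInter_indepLit hQ').sdiff J.finite_toSet).mono ?_)
  rintro y ⟨hy, hyJ⟩
  simp only [Q', Finset.set_biInter_inter, Finset.set_biInter_finset_image] at hy
  refine ⟨mem_iInter₂.2 fun p hp => ?_, hy.1⟩
  have hpJ : y ≠ p.1.1 ∧ y ≠ p.1.2 := by
    constructor <;> rintro rfl <;> exact hyJ (Finset.mem_biUnion.2 ⟨p, hp, by simp⟩)
  rw [mem_baseLit_iff _ hpJ.1 hpJ.2]
  exact mem_iInter₂.1 hy.2 p hp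

theorem compl_indepLit (q : Set ℕ × Bool) : (indepLit q)ᶜ = indepLit (q.1, !q.2) := by
  obtain ⟨_, _ | _⟩ := q <;> simp [indepLit]

theorem consistent_singleton (q : Set ℕ × Bool) : Consistent {q} := by
  intro σ ht hf
  rw [Finset.mem_singleton] at ht hf
  exact Bool.false_ne_true (congrArg Prod.snd (hf.trans ht.symm))

structure Term where
  lits : Finset (Set ℕ)
  idx : Finset (Set ℕ × Bool)

namespace Term

def litInter (t : Term) : Set ℕ := ⋂ ℓ ∈ t.lits, ℓ

def val (t : Term) : Set ℕ := t.litInter ∩ ⋂ q ∈ t.idx, indepLit q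

def indices (t : Term) : Finset (Set ℕ) := t.idx.image Prod.fst

open Classical in
def merge (s t : Term) : Term := ⟨s.lits ∪ t.lits, s.idx ∪ t.idx⟩

def ofLits (g : Finset (Set ℕ)) : Term := ⟨g, ∅⟩

def ofIdx (q : Set ℕ × Bool) : Term := ⟨∅, {q}⟩

def Admissible (G U : Set (Set ℕ)) (t : Term) : Prop :=
  ↑t.lits ⊆ G ∧ ∀ q ∈ t.idx, q.1 ∈ free \ U

theorem val_subset_litInter (t : Term) : t.val ⊆ t.litInter := inter_subset_left

theorem val_merge (s t : Term) : (s.merge t).val = s.val ∩ t.val := by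
  classical
  simp only [val, litInter, merge, Finset.set_biInter_inter]
  ac_rfl

theorem litInter_merge (s t : Term) : (s.merge t).litInter = s.litInter ∩ t.litInter := by
  classical
  simp only [litInter, merge, Finset.set_biInter_inter]

@[simp] theorem val_ofLits (g : Finset (Set ℕ)) : (ofLits g).val = ⋂ ℓ ∈ g, ℓ := by
  simp [val, ofLits, litInter]

@[simp] theorem val_ofIdx (q : Set ℕ × Bool) : (ofIdx q).val = indepLit q := by
  simp [val, ofIdx, litInter]

@[simp] theorem litInter_ofIdx (q : Set ℕ × Bool) : (ofIdx q).litInter = univ := by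
  simp [ofIdx, litInter]

theorem mem_indices {t : Term} {q : Set ℕ × Bool} (hq : q ∈ t.idx) : q.1 ∈ t.indices :=
  Finset.mem_image_of_mem _ hq

theorem indices_merge (s t : Term) : (s.merge t).indices = s.indices ∪ t.indices := by
  classical
  simp only [indices, merge, Finset.image_union]

@[simp] theorem indices_ofIdx (q : Set ℕ × Bool) : (ofIdx q).indices = {q.1} := by
  simp [indices, ofIdx]

@[simp] theorem indices_ofLits (g : Finset (Set ℕ)) : (ofLits g).indices = ∅ := by
  simp [indices, ofLits]

theorem consistent_ofLits (g : Finset (Set ℕ)) : Consistent (ofLits g).idx := by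
  simp [ofLits, Consistent]

theorem consistent_ofIdx_merge {q : Set ℕ × Bool} {t : Term} (hq : q.1 ∉ t.indices)
    (ht : Consistent t.idx) : Consistent ((ofIdx q).merge t).idx :=
  (consistent_singleton q).union ht fun _ hq₁ q' hq' e =>
    hq ((Finset.mem_singleton.1 hq₁ ▸ e : q.1 = q'.1) ▸ mem_indices hq')

theorem consistent_of_nonempty {t : Term} (h : t.val.Nonempty) : Consistent t.idx := by
  intro σ ht hf
  obtain ⟨y, -, hy⟩ := h
  have h1 := mem_iInter₂.1 hy _ ht
  have h2 := mem_iInter₂.1 hy _ hf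
  simp only [indepLit, if_true, Bool.false_eq_true, if_false] at h1 h2
  exact h2 h1

theorem Admissible.mono {G G' U U' : Set (Set ℕ)} {t : Term} (ht : t.Admissible G U)
    (hG : G ⊆ G') (hU : U' ⊆ U) : t.Admissible G' U' :=
  ⟨ht.1.trans hG, fun q hq => ⟨(ht.2 q hq).1, fun h => (ht.2 q hq).2 (hU h)⟩⟩

theorem Admissible.merge {G U : Set (Set ℕ)} {s t : Term} (hs : s.Admissible G U)
    (ht : t.Admissible G U) : (s.merge t).Admissible G U := by
  classical
  refine ⟨?_, fun q hq => ?_⟩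
  · simp only [Term.merge, Finset.coe_union]
    exact union_subset hs.1 ht.1
  · rcases Finset.mem_union.1 hq with hq | hq
    exacts [hs.2 q hq, ht.2 q hq]

theorem admissible_ofLits {G U : Set (Set ℕ)} {g : Finset (Set ℕ)} (hg : ↑g ⊆ G) :
    (ofLits g).Admissible G U :=
  ⟨hg, by simp [ofLits]⟩

theorem admissible_ofIdx {G U : Set (Set ℕ)} {q : Set ℕ × Bool} (hq : q.1 ∈ free \ U) :
    (ofIdx q).Admissible G U :=
  ⟨by simp [ofIdx], by simpa [ofIdx] using hq⟩

theorem Admissible.indices_ne {G U' : Set (Set ℕ)} {s u : Term} (hs : s.Admissible G U')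
    (hu : ↑u.indices ⊆ U') : ∀ q ∈ s.idx, ∀ q' ∈ u.idx, q.1 ≠ q'.1 :=
  fun q hq _ hq' h => (hs.2 q hq).2 (h ▸ hu (mem_indices hq'))

end Term

open Term

def Sound (G U : Set (Set ℕ)) (c : Set ℕ) : Prop :=
  ∀ s : Term, s.Admissible G U →
    ((c ∩ s.val).Finite → c ∩ s.val = ∅) ∧
    (Consistent s.idx → (c ∩ s.litInter).Nonempty → (c ∩ s.val).Nonempty)

def Good (G U : Set (Set ℕ)) : Prop := Sound G U univ

section Sound

variable {G G' U U' : Set (Set ℕ)} {c d : Set ℕ} {s t u : Term}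

theorem Sound.mono (h : Sound G U c) (hG : G' ⊆ G) (hU : U ⊆ U') : Sound G' U' c :=
  fun s hs => h s (hs.mono hG hU)

theorem Good.mono (h : Good G U) (hG : G' ⊆ G) (hU : U ⊆ U') : Good G' U' :=
  Sound.mono h hG hU

theorem Good.eq_empty_of_finite (h : Good G U) (ht : t.Admissible G U) (hfin : t.val.Finite) :
    t.val = ∅ := by
  simpa using (h t ht).1 (by simpa using hfin)

theorem Good.infinite (h : Good G U) (ht : t.Admissible G U) (hne : t.val.Nonempty) :
    t.val.Infinite :=
  fun hfin => hne.ne_empty (h.eq_empty_of_finite ht hfin)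

theorem Good.nonempty (h : Good G U) (ht : t.Admissible G U) (hcons : Consistent t.idx)
    (hne : t.litInter.Nonempty) : t.val.Nonempty := by
  simpa using (h t ht).2 hcons (by simpa using hne)

theorem sound_empty : Sound G U ∅ := fun _ _ => ⟨by simp, by simp⟩

theorem Sound.union (hc : Sound G U c) (hd : Sound G U d) : Sound G U (c ∪ d) := by
  intro s hs
  simp only [union_inter_distrib_right, finite_union, union_nonempty, union_empty_iff]
  exact ⟨fun hfin => ⟨(hc s hs).1 hfin.1, (hd s hs).1 hfin.2⟩,
    fun hcons => Or.imp ((hc s hs).2 hcons) ((hd s hs).2 hcons)⟩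

theorem Sound.biUnion {ι : Type*} (I : Finset ι) {f : ι → Set ℕ}
    (h : ∀ i ∈ I, Sound G U (f i)) : Sound G U (⋃ i ∈ I, f i) := by
  classical
  induction I using Finset.induction_on with
  | empty => simpa using sound_empty
  | insert i I _ ih =>
    rw [Finset.set_biUnion_insert]
    exact (h i (Finset.mem_insert_self i I)).union
      (ih fun j hj => h j (Finset.mem_insert_of_mem hj))

theorem Good.val_inter_nonempty (h : Good G U) (hs : s.Admissible G U) (hu : u.Admissible G U)
    (hscons : Consistent s.idx) (hucons : Consistent u.idx)
    (hne : ∀ q ∈ s.idx, ∀ q' ∈ u.idx, q.1 ≠ q'.1) (hlit : (s.litInter ∩ u.litInter).Nonempty) :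
    (s.val ∩ u.val).Nonempty := by
  rw [← val_merge]
  exact h.nonempty (hs.merge hu) (hscons.union hucons hne) (by rwa [litInter_merge])

theorem Good.sound_of_infinite (h : Good G U) (hU : U ⊆ U') (hu : u.Admissible G U)
    (hcons : Consistent u.idx) (hV : ↑u.indices ⊆ U') (hc : c ⊆ u.val)
    (hinf : ∀ s : Term, s.Admissible G U' → (s.val ∩ u.val).Nonempty → (c ∩ s.val).Infinite) :
    Sound G U' c := by
  intro s hs
  constructor
  · intro hfin
    by_contra hne
    obtain ⟨z, hzc, hzs⟩ := nonempty_iff_ne_empty.2 hne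
    exact hinf s hs ⟨z, hzs, hc hzc⟩ hfin
  · rintro hscons ⟨z, hzc, hzs⟩
    exact (hinf s hs (h.val_inter_nonempty (hs.mono subset_rfl hU) hu hscons hcons
      (hs.indices_ne hV) ⟨z, hzs, u.val_subset_litInter (hc hzc)⟩)).nonempty

theorem Good.sound_of_infinite_of_nonempty (h : Good G U) (hU : U ⊆ U')
    (hinf : ∀ s : Term, s.Admissible G U' → s.val.Nonempty → (c ∩ s.val).Infinite) :
    Sound G U' c :=
  h.sound_of_infinite hU (u := ofLits ∅) (admissible_ofLits (by simp)) (consistent_ofLits _)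
    (by simp) (by simp) fun s hs hne => hinf s hs (by simpa using hne)

theorem Good.sound_val (h : Good G U) (hU : U ⊆ U') (hu : u.Admissible G U)
    (hcons : Consistent u.idx) (hV : ↑u.indices ⊆ U') : Sound G U' u.val :=
  h.sound_of_infinite hU hu hcons hV subset_rfl fun (s : Term) hs hne => by
    rw [inter_comm, ← val_merge]
    exact h.infinite ((hs.mono subset_rfl hU).merge hu) (by rwa [val_merge])

theorem Good.sound_compl_val (h : Good G U) (hG : ∀ ℓ ∈ G, ℓᶜ ∈ G) (hU : U ⊆ U')
    (hu : u.Admissible G U) (hV : ↑u.indices ⊆ U') : Sound G U' u.valᶜ := by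
  have : u.valᶜ = (⋃ ℓ ∈ u.lits, (ofLits {ℓᶜ}).val) ∪ ⋃ q ∈ u.idx, (ofIdx (q.1, !q.2)).val := by
    rw [val, litInter, compl_inter, compl_iInter₂, compl_iInter₂]
    simp [compl_indepLit]
  rw [this]
  refine (Sound.biUnion _ fun ℓ hℓ => h.sound_val hU ?_ ?_ ?_).union
    (Sound.biUnion _ fun q hq => h.sound_val hU ?_ (consistent_singleton _) ?_)
  · exact admissible_ofLits (by simpa using hG ℓ (hu.1 hℓ))
  · exact consistent_ofLits _
  · simp
  · exact admissible_ofIdx (hu.2 q hq)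
  · simpa using hV (mem_indices hq)

theorem Good.sound_biInter_of_subset_pair (h : Good G U) (hc : Sound G U c)
    (hcc : Sound G U cᶜ) {r : Finset (Set ℕ)} (hr : ↑r ⊆ ({c, cᶜ} : Set (Set ℕ))) :
    Sound G U (⋂ ℓ ∈ r, ℓ) := by
  have hr' : ∀ ℓ ∈ r, ℓ = c ∨ ℓ = cᶜ := fun ℓ hℓ => hr hℓ
  by_cases h1 : c ∈ r <;> by_cases h2 : cᶜ ∈ r
  · rw [eq_empty_of_subset_empty fun y hy =>
      (mem_iInter₂.1 hy cᶜ h2 : y ∈ cᶜ) (mem_iInter₂.1 hy c h1)]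
    exact sound_empty
  · rw [Finset.eq_singleton_iff_unique_mem.2 ⟨h1, fun ℓ hℓ =>
      (hr' ℓ hℓ).resolve_right fun e => h2 (e ▸ hℓ)⟩, Finset.set_biInter_singleton]
    exact hc
  · rw [Finset.eq_singleton_iff_unique_mem.2 ⟨h2, fun ℓ hℓ =>
      (hr' ℓ hℓ).resolve_left fun e => h1 (e ▸ hℓ)⟩, Finset.set_biInter_singleton]
    exact hcc
  · rw [Finset.eq_empty_of_forall_notMem fun ℓ hℓ =>
      (hr' ℓ hℓ).elim (fun e => h1 (e ▸ hℓ)) fun e => h2 (e ▸ hℓ)]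
    rw [← Finset.set_biInter_coe, Finset.coe_empty, biInter_empty]
    exact h

theorem good_of_forall_finset
    (h : ∀ g : Finset (Set ℕ), ↑g ⊆ G → ∃ G' U', Good G' U' ∧ ↑g ⊆ G' ∧ U' ⊆ U) : Good G U := by
  intro t ht
  obtain ⟨G', U', hgood, hg, hU⟩ := h t.lits ht.1
  exact hgood t ⟨hg, fun q hq => ⟨(ht.2 q hq).1, fun h' => (ht.2 q hq).2 (hU h')⟩⟩

theorem Good.extend (h : Good G U) (hc : Sound G U c) (hcc : Sound G U cᶜ) :
    Good (G ∪ {c, cᶜ}) U := by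
  classical
  intro t ht
  let s : Term := ⟨t.lits.filter (· ∈ G), t.idx⟩
  let r := t.lits.filter (· ∉ G)
  have hs : s.Admissible G U := ⟨fun ℓ hℓ => (Finset.mem_filter.1 hℓ).2, ht.2⟩
  have hr : ↑r ⊆ ({c, cᶜ} : Set (Set ℕ)) := fun ℓ hℓ =>
    (ht.1 (Finset.mem_filter.1 hℓ).1).resolve_left (Finset.mem_filter.1 hℓ).2
  have hlits : t.lits = r ∪ s.lits := by
    rw [Finset.union_comm]; exact (Finset.filter_union_filter_not_eq _ _).symm
  have hlit : t.litInter = (⋂ ℓ ∈ r, ℓ) ∩ s.litInter := by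
    rw [litInter, hlits, Finset.set_biInter_inter]; rfl
  have hval : t.val = (⋂ ℓ ∈ r, ℓ) ∩ s.val := by
    rw [val, hlit, val, inter_assoc]
  simpa [hval, hlit] using h.sound_biInter_of_subset_pair hc hcc hr s hs

end Sound

theorem good_baseLits (U : Set (Set ℕ)) : Good baseLits U := by
  classical
  have key : ∀ t : Term, t.Admissible baseLits U → Consistent t.idx →
      t.litInter = ∅ ∨ t.val.Infinite := by
    intro t ht hcons
    obtain ⟨L, -, hL⟩ := Finset.subset_set_image_iff.1 (image_univ (f := baseLit) ▸ ht.1 :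
      ↑t.lits ⊆ baseLit '' univ)
    have hlit : t.litInter = ⋂ p ∈ L, baseLit p := by
      rw [litInter, ← hL, Finset.set_biInter_finset_image]
    rw [val, hlit]
    exact baseLit_inter_empty_or_infinite L hcons fun q hq => (ht.2 q hq).1
  intro t ht
  simp only [univ_inter]
  refine ⟨fun hfin => ?_, fun hcons hne => ?_⟩
  · by_contra hne
    have hne := nonempty_iff_ne_empty.2 hne
    rcases key t ht (consistent_of_nonempty hne) with h | h
    · exact (hne.mono t.val_subset_litInter).ne_empty h
    · exact h hfin
  · rcases key t ht hcons with h | h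
    · exact absurd h hne.ne_empty
    · exact h.nonempty

def HasTermIn (G U : Set (Set ℕ)) (A : Set ℕ) : Prop :=
  ∃ t : Term, t.Admissible G U ∧ t.val.Nonempty ∧ t.val ⊆ A

def IsDenseIn (G U : Set (Set ℕ)) (A : Set ℕ) (w : Term) : Prop :=
  ∀ t : Term, t.Admissible G U → (t.val ∩ w.val).Nonempty → (t.val ∩ w.val ∩ A).Infinite

def HasDenseTerm (G U : Set (Set ℕ)) (A : Set ℕ) : Prop :=
  ∃ w : Term, w.Admissible G U ∧ w.val.Nonempty ∧ IsDenseIn G U A w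

section Extension

variable {G U : Set (Set ℕ)} {A : Set ℕ} {s t w : Term}

theorem Good.exists_subset_sdiff (h : Good G U) (hbase : baseLits ⊆ G) (ht : t.Admissible G U)
    (hne : t.val.Nonempty) {S : Set ℕ} (hS : S.Finite) :
    ∃ t' : Term, t'.Admissible G U ∧ t'.val.Nonempty ∧ t'.val ⊆ t.val \ S := by
  classical
  obtain ⟨z, hzt, hzS⟩ := ((h.infinite ht hne).sdiff hS).nonempty
  let g := hS.toFinset.image (sepSet z)
  have hg : ↑g ⊆ G := by
    intro ℓ hℓ
    obtain ⟨y, -, rfl⟩ := Finset.mem_image.1 hℓ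
    exact hbase (sepSet_mem_baseLits z y)
  refine ⟨(ofLits g).merge t, (admissible_ofLits hg).merge ht, ⟨z, ?_⟩, ?_⟩
  · rw [val_merge, val_ofLits, Finset.set_biInter_finset_image]
    exact ⟨mem_iInter₂.2 fun y _ => mem_sepSet_self z y, hzt⟩
  · rw [val_merge, val_ofLits, Finset.set_biInter_finset_image]
    rintro y ⟨hyg, hyt⟩
    refine ⟨hyt, fun hyS => ?_⟩
    exact notMem_sepSet (fun e : z = y => hzS (e ▸ hyS)) (mem_iInter₂.1 hyg y (by simpa using hyS))

theorem Good.infinite_sdiff_of_not_hasTermIn (h : Good G U) (hbase : baseLits ⊆ G)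
    (hA : ¬ HasTermIn G U A) (ht : t.Admissible G U) (hne : t.val.Nonempty) :
    (t.val \ A).Infinite := by
  intro hfin
  obtain ⟨t', ht', hne', hsub⟩ := h.exists_subset_sdiff hbase ht hne hfin
  exact hA ⟨t', ht', hne', fun y hy => by_contra fun hyA => (hsub hy).2 ⟨(hsub hy).1, hyA⟩⟩

theorem Good.exists_subset_sdiff_of_not_hasDenseTerm (h : Good G U) (hbase : baseLits ⊆ G)
    (hA : ¬ HasDenseTerm G U A) (hw : w.Admissible G U) (hne : w.val.Nonempty) :
    ∃ t' : Term, t'.Admissible G U ∧ t'.val.Nonempty ∧ t'.val ⊆ w.val \ A := by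
  simp only [HasDenseTerm, IsDenseIn, not_exists, not_and, not_forall, not_infinite] at hA
  obtain ⟨t, ht, hmeet, hfin⟩ := hA w hw hne
  obtain ⟨t', ht', hne', hsub⟩ :=
    h.exists_subset_sdiff hbase (ht.merge hw) (by rwa [val_merge]) hfin
  rw [val_merge] at hsub
  exact ⟨t', ht', hne', fun y hy => ⟨(hsub hy).1.2, fun hyA => (hsub hy).2 ⟨(hsub hy).1, hyA⟩⟩⟩

theorem Good.indepLit_inter_infinite {U' : Set (Set ℕ)} (h : Good G U) (hU : U ⊆ U')
    {x : Set ℕ} (hx : x ∈ free \ U) (hxU' : x ∈ U') (b : Bool) (hs : s.Admissible G U')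
    (hne : s.val.Nonempty) : (indepLit (x, b) ∩ s.val).Infinite := by
  have hs' := hs.mono subset_rfl hU
  have hxs : ∀ q ∈ s.idx, ∀ q' ∈ (ofIdx (x, b)).idx, q.1 ≠ q'.1 :=
    hs.indices_ne (by simpa using hxU')
  rw [inter_comm, ← val_ofIdx, ← val_merge]
  refine h.infinite (hs'.merge (admissible_ofIdx hx)) ?_
  rw [val_merge]
  exact h.val_inter_nonempty hs' (admissible_ofIdx hx) (consistent_of_nonempty hne)
    (consistent_singleton _) hxs (by simpa using hne.mono s.val_subset_litInter)

theorem Good.extend_val (h : Good G U) (hG : ∀ ℓ ∈ G, ℓᶜ ∈ G) (hw : w.Admissible G U)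
    (hne : w.val.Nonempty) : Good (G ∪ {w.val, w.valᶜ}) (U ∪ ↑w.indices) :=
  (h.mono subset_rfl subset_union_left).extend
    (h.sound_val subset_union_left hw (consistent_of_nonempty hne) subset_union_right)
    (h.sound_compl_val hG subset_union_left hw subset_union_right)

theorem Good.sound_of_infinite_inter_indep (h : Good G U) (hw : w.Admissible G U)
    (hne : w.val.Nonempty) {x : Set ℕ} (hx : x ∈ free \ (U ∪ ↑w.indices)) {c : Set ℕ}
    (hc : c ⊆ indep x ∩ w.val)
    (hinf : ∀ s : Term, s.Admissible G (U ∪ ↑(insert x w.indices)) →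
      (s.val ∩ (indep x ∩ w.val)).Nonempty → (c ∩ s.val).Infinite) :
    Sound G (U ∪ ↑(insert x w.indices)) c := by
  classical
  have hxU : x ∈ free \ U := ⟨hx.1, fun h' => hx.2 (Or.inl h')⟩
  have hval : ((ofIdx (x, true)).merge w).val = indep x ∩ w.val := by
    simp [val_merge, indepLit]
  refine h.sound_of_infinite subset_union_left ((admissible_ofIdx hxU).merge hw)
    (consistent_ofIdx_merge (fun h' => hx.2 (Or.inr h')) (consistent_of_nonempty hne)) ?_
    (hval ▸ hc) (hval ▸ hinf)
  rw [indices_merge, indices_ofIdx, ← Finset.insert_eq]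
  exact subset_union_right

theorem Good.extend_dense (h : Good G U) (hG : ∀ ℓ ∈ G, ℓᶜ ∈ G) (hbase : baseLits ⊆ G)
    (hA : ¬ HasTermIn G U A) (hw : w.Admissible G U) (hne : w.val.Nonempty)
    (hd : IsDenseIn G U A w) {x : Set ℕ} (hx : x ∈ free \ (U ∪ ↑w.indices)) :
    Good (G ∪ {indep x ∩ A ∩ w.val, (indep x ∩ A ∩ w.val)ᶜ}) (U ∪ ↑(insert x w.indices)) := by
  have hU : U ⊆ U ∪ ↑(insert x w.indices) := subset_union_left
  have hxU : x ∈ free \ U := ⟨hx.1, fun h' => hx.2 (Or.inl h')⟩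
  have hcompl : (indep x ∩ A ∩ w.val)ᶜ =
      (ofIdx (x, false)).val ∪ w.valᶜ ∪ ((indep x ∩ w.val) \ A) := by
    ext y
    simp only [val_ofIdx, indepLit, Bool.false_eq_true, if_false, mem_compl_iff, mem_union,
      mem_inter_iff, mem_sdiff]
    tauto
  refine (h.mono subset_rfl hU).extend
    (h.sound_of_infinite_inter_indep hw hne hx (fun y hy => ⟨hy.1.1, hy.2⟩) fun s hs hmeet => ?_)
    (hcompl ▸ ((h.sound_val hU (admissible_ofIdx hxU) (consistent_singleton _) ?_).union
      (h.sound_compl_val hG hU hw fun σ hσ => Or.inr (Finset.mem_insert_of_mem hσ))).union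
      (h.sound_of_infinite_inter_indep hw hne hx sdiff_subset fun s hs hmeet => ?_))
  · have := hd (s.merge (ofIdx (x, true))) ((hs.mono subset_rfl hU).merge (admissible_ofIdx hxU))
      (by simpa [val_merge, indepLit, inter_assoc] using hmeet)
    convert this using 1
    ext y
    simp only [val_merge, val_ofIdx, indepLit, if_true, mem_inter_iff]
    tauto
  · simp
  · have := h.infinite_sdiff_of_not_hasTermIn hbase hA
      ((hs.mono subset_rfl hU).merge ((admissible_ofIdx (q := (x, true)) hxU).merge hw))
      (by simpa [val_merge, indepLit] using hmeet)
    convert this using 1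
    ext y
    simp only [val_merge, val_ofIdx, indepLit, if_true, mem_inter_iff, mem_sdiff]
    tauto

theorem Good.inter_inter_nonempty_of_isDenseIn (h : Good G U) (hw : w.Admissible G U)
    (hne : w.val.Nonempty) (hd : IsDenseIn G U A w) {x : Set ℕ}
    (hx : x ∈ free \ (U ∪ ↑w.indices)) : (indep x ∩ A ∩ w.val).Nonempty := by
  have hxU : x ∈ free \ U := ⟨hx.1, fun h' => hx.2 (Or.inl h')⟩
  have hu := h.nonempty ((admissible_ofIdx (q := (x, true)) hxU).merge hw)
    (consistent_ofIdx_merge (fun h' => hx.2 (Or.inr h')) (consistent_of_nonempty hne))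
    (by simpa [litInter_merge] using hne.mono w.val_subset_litInter)
  rw [val_merge] at hu
  obtain ⟨y, ⟨hyx, hyw⟩, hyA⟩ := (hd _ (admissible_ofIdx hxU) hu).nonempty
  exact ⟨y, ⟨by simpa [indepLit] using hyx, hyA⟩, hyw⟩

theorem Good.compl_inter_infinite_of_not_hasDenseTerm (h : Good G U) (hbase : baseLits ⊆ G)
    (hA : ¬ HasDenseTerm G U A) {x : Set ℕ} (hx : x ∈ free \ U) (hs : s.Admissible G (U ∪ {x}))
    (hne : s.val.Nonempty) : ((indep x ∪ A)ᶜ ∩ s.val).Infinite := by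
  have hU : U ⊆ U ∪ {x} := subset_union_left
  obtain ⟨t', ht', hne', hsub⟩ := h.exists_subset_sdiff_of_not_hasDenseTerm hbase hA
    ((hs.mono subset_rfl hU).merge (admissible_ofIdx (q := (x, false)) hx))
    (by rw [val_merge, val_ofIdx, inter_comm]
        exact (h.indepLit_inter_infinite hU hx (Or.inr rfl) false hs hne).nonempty)
  refine (h.infinite ht' hne').mono (hsub.trans ?_)
  rintro y ⟨hy, hyA⟩
  rw [val_merge, val_ofIdx] at hy
  simp only [indepLit, Bool.false_eq_true, if_false] at hy
  exact ⟨fun h' => h'.elim hy.2 hyA, hy.1⟩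

theorem Good.extend_cover (h : Good G U) (hbase : baseLits ⊆ G) (hA : ¬ HasDenseTerm G U A)
    {x : Set ℕ} (hx : x ∈ free \ U) :
    Good (G ∪ {indep x ∪ A, (indep x ∪ A)ᶜ}) (U ∪ {x}) := by
  have hU : U ⊆ U ∪ {x} := subset_union_left
  refine (h.mono subset_rfl hU).extend (h.sound_of_infinite_of_nonempty hU fun s hs hne => ?_)
    (h.sound_of_infinite_of_nonempty hU fun s hs hne =>
      h.compl_inter_infinite_of_not_hasDenseTerm hbase hA hx hs hne)
  refine (h.indepLit_inter_infinite hU hx (Or.inr rfl) true hs hne).mono ?_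
  simp only [indepLit, if_true]
  exact inter_subset_inter_left _ subset_union_left

end Extension

open Cardinal Topology

def fresh (S : Set (Set ℕ)) : Set ℕ := Classical.epsilon (· ∈ free \ S)

theorem fresh_mem {S : Set (Set ℕ)} (hS : #S < 𝔠) : fresh S ∈ free \ S := by
  refine Classical.epsilon_spec (p := (· ∈ free \ S)) ?_
  by_contra hc
  have hfree : free ⊆ S := fun σ hσ => by_contra fun h => hc ⟨σ, hσ, h⟩
  have : 𝔠 ≤ #free := by
    rw [← mk_set_nat]
    refine mk_le_of_injective (f := fun σ : Set ℕ => (⟨(· + 1) '' σ, by simp [free]⟩ : free)) ?_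
    intro σ σ' h
    exact image_injective.2 (add_left_injective 1) (congrArg Subtype.val h)
  exact (this.trans (mk_le_mk_of_subset hfree)).not_gt hS

theorem mk_union_finset_lt {S : Set (Set ℕ)} (hS : #S < 𝔠) (F : Finset (Set ℕ)) :
    #↑(S ∪ ↑F) < 𝔠 :=
  (mk_union_le _ _).trans_lt
    (add_lt_of_lt aleph0_le_continuum hS ((lt_aleph0_of_finite _).trans aleph0_lt_continuum))

open Classical in
def stepResult (G U : Set (Set ℕ)) (A : Set ℕ) : Set ℕ × Finset (Set ℕ) :=
  if h : HasTermIn G U A then (h.choose.val, h.choose.indices)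
  else if h : HasDenseTerm G U A then
    (indep (fresh (U ∪ ↑h.choose.indices)) ∩ A ∩ h.choose.val,
      insert (fresh (U ∪ ↑h.choose.indices)) h.choose.indices)
  else (indep (fresh U) ∪ A, {fresh U})

section Step

variable {G U : Set (Set ℕ)} {A : Set ℕ}

theorem stepResult_of_not_of_not (hA : ¬ HasTermIn G U A) (hC : ¬ HasDenseTerm G U A) :
    stepResult G U A = (indep (fresh U) ∪ A, {fresh U}) := by
  simp [stepResult, hA, hC]

theorem Good.step (h : Good G U) (hG : ∀ ℓ ∈ G, ℓᶜ ∈ G) (hbase : baseLits ⊆ G) (hU : #U < 𝔠) :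
    Good (G ∪ {(stepResult G U A).1, (stepResult G U A).1ᶜ}) (U ∪ ↑(stepResult G U A).2) := by
  unfold stepResult
  split_ifs with hA hC
  · obtain ⟨hw, hne, -⟩ := hA.choose_spec
    exact h.extend_val hG hw hne
  · obtain ⟨hw, hne, hd⟩ := hC.choose_spec
    exact h.extend_dense hG hbase hA hw hne hd (fresh_mem (mk_union_finset_lt hU _))
  · simpa using h.extend_cover hbase hC (fresh_mem hU)

theorem Good.stepResult_nonempty_subset (h : Good G U) (hU : #U < 𝔠)
    (hAC : HasTermIn G U A ∨ HasDenseTerm G U A) :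
    (stepResult G U A).1.Nonempty ∧ (stepResult G U A).1 ⊆ A := by
  unfold stepResult
  split_ifs with hA hC
  · exact hA.choose_spec.2
  · obtain ⟨hw, hne, hd⟩ := hC.choose_spec
    exact ⟨h.inter_inter_nonempty_of_isDenseIn hw hne hd (fresh_mem (mk_union_finset_lt hU _)),
      fun y hy => hy.1.2⟩
  · exact (hAC.resolve_left hA |> hC).elim

end Step

abbrev Stage : Type := (𝔠).ord.ToType

def enum : Stage ≃ Set ℕ := Classical.choice (Cardinal.eq.1 (by simp))

def stages : Stage → Set ℕ × Finset (Set ℕ) :=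
  wellFounded_lt.fix fun α rec =>
    stepResult (baseLits ∪ {ℓ | ∃ β h, ℓ = (rec β h).1 ∨ ℓ = (rec β h).1ᶜ})
      {σ | ∃ β h, σ ∈ (rec β h).2} (enum α)

def lang (α : Stage) : Set (Set ℕ) :=
  baseLits ∪ {ℓ | ∃ β < α, ℓ = (stages β).1 ∨ ℓ = (stages β).1ᶜ}

def used (α : Stage) : Set (Set ℕ) := {σ | ∃ β < α, σ ∈ (stages β).2}

theorem stages_eq (α : Stage) : stages α = stepResult (lang α) (used α) (enum α) := by
  rw [stages, WellFounded.fix_eq]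
  simp only [lang, used, exists_prop]
  rfl

theorem baseLits_subset_lang (α : Stage) : baseLits ⊆ lang α := subset_union_left

theorem compl_mem_lang {α : Stage} {ℓ : Set ℕ} (h : ℓ ∈ lang α) : ℓᶜ ∈ lang α := by
  rcases h with h | ⟨β, hβ, rfl | rfl⟩
  · exact Or.inl (compl_mem_baseLits h)
  · exact Or.inr ⟨β, hβ, Or.inr rfl⟩
  · exact Or.inr ⟨β, hβ, Or.inl (compl_compl _)⟩

theorem lang_mono : Monotone lang := by
  rintro α α' h ℓ (hℓ | ⟨β, hβ, hℓ⟩)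
  exacts [Or.inl hℓ, Or.inr ⟨β, hβ.trans_le h, hℓ⟩]

def langLe (β : Stage) : Set (Set ℕ) := lang β ∪ {(stages β).1, (stages β).1ᶜ}

theorem langLe_subset_lang {β α : Stage} (h : β < α) : langLe β ⊆ lang α := by
  rintro ℓ (hℓ | rfl | rfl)
  exacts [lang_mono h.le hℓ, Or.inr ⟨β, h, Or.inl rfl⟩, Or.inr ⟨β, h, Or.inr rfl⟩]

theorem langLe_mono : Monotone langLe := by
  intro γ β h
  rcases h.lt_or_eq with h | rfl
  exacts [(langLe_subset_lang h).trans subset_union_left, subset_rfl]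

theorem used_subset {β α : Stage} (h : β < α) : used β ∪ ↑(stages β).2 ⊆ used α := by
  rintro σ (⟨γ, hγ, hσ⟩ | hσ)
  exacts [⟨γ, hγ.trans h, hσ⟩, ⟨β, h, hσ⟩]

theorem mk_used_lt (α : Stage) : #(used α) < 𝔠 := by
  have hsub : used α ⊆ ⋃ β : Iio α, ↑(stages β).2 := fun σ ⟨β, hβ, hσ⟩ =>
    mem_iUnion.2 ⟨⟨β, hβ⟩, hσ⟩
  calc #(used α) ≤ #(Iio α) * ⨆ β : Iio α, #↑(↑(stages β).2 : Set (Set ℕ)) :=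
        (mk_le_mk_of_subset hsub).trans (mk_iUnion_le _)
    _ ≤ #(Iio α) * ℵ₀ :=
        mul_le_mul_right (ciSup_le' fun β => (lt_aleph0_of_finite _).le) _
    _ < 𝔠 := mul_lt_of_lt aleph0_le_continuum (by simpa using mk_Iio_lt α) aleph0_lt_continuum

theorem finset_subset_lang {α : Stage} {g : Finset (Set ℕ)} (hg : ↑g ⊆ lang α) :
    ↑g ⊆ baseLits ∨ ∃ β < α, ↑g ⊆ langLe β := by
  classical
  induction g using Finset.induction_on with
  | empty => simp
  | insert ℓ g _ ih =>
    rw [Finset.coe_insert, insert_subset_iff] at hg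
    rw [Finset.coe_insert]
    rcases hg.1, ih hg.2 with ⟨hℓ | ⟨β, hβ, hℓ⟩, hg' | ⟨γ, hγ, hg'⟩⟩
    · exact Or.inl (insert_subset hℓ hg')
    · exact Or.inr ⟨γ, hγ, insert_subset (Or.inl (baseLits_subset_lang γ hℓ)) hg'⟩
    · exact Or.inr ⟨β, hβ, insert_subset (Or.inr hℓ)
        (hg'.trans ((baseLits_subset_lang β).trans subset_union_left))⟩
    · rcases le_total β γ with hβγ | hγβ
      · exact Or.inr ⟨γ, hγ, insert_subset (langLe_mono hβγ (Or.inr hℓ)) hg'⟩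
      · exact Or.inr ⟨β, hβ, insert_subset (Or.inr hℓ) (hg'.trans (langLe_mono hγβ))⟩

theorem Good.extend_stage {α : Stage} (h : Good (lang α) (used α)) :
    Good (langLe α) (used α ∪ ↑(stages α).2) := by
  rw [langLe, stages_eq]
  exact h.step (fun _ => compl_mem_lang) (baseLits_subset_lang α) (mk_used_lt α)

theorem good_lang (α : Stage) : Good (lang α) (used α) := by
  induction α using WellFoundedLT.induction with
  | _ α ih =>
  refine good_of_forall_finset fun g hg => ?_
  rcases finset_subset_lang hg with hg | ⟨β, hβ, hg⟩
  · exact ⟨baseLits, used α, good_baseLits _, hg, subset_rfl⟩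
  · exact ⟨langLe β, _, (ih β hβ).extend_stage, hg, used_subset hβ⟩

def Covers (α : Stage) : Prop :=
  ¬ HasTermIn (lang α) (used α) (enum α) ∧ ¬ HasDenseTerm (lang α) (used α) (enum α)

theorem Covers.stages_eq {α : Stage} (h : Covers α) :
    stages α = (indep (fresh (used α)) ∪ enum α, {fresh (used α)}) := by
  rw [StronglyRemote.stages_eq, stepResult_of_not_of_not h.1 h.2]

theorem stages_nonempty_subset_of_not_covers {α : Stage} (h : ¬ Covers α) :
    (stages α).1.Nonempty ∧ (stages α).1 ⊆ enum α := by
  rw [stages_eq]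
  exact (good_lang α).stepResult_nonempty_subset (mk_used_lt α)
    (not_and_or.1 h |>.imp not_not.1 not_not.1)

theorem nonempty_iInter_compl_stages (Γ : Finset Stage) (hΓ : ∀ α ∈ Γ, Covers α) :
    (⋂ α ∈ Γ, (stages α).1ᶜ).Nonempty := by
  classical
  induction Γ using Finset.induction_on_max with
  | empty => simp
  | insert a Γ hlt ih =>
    have hcov := hΓ a (Finset.mem_insert_self a Γ)
    let g := Γ.image fun β => (stages β).1ᶜ
    have hg : ↑g ⊆ lang a := by
      intro ℓ hℓ
      obtain ⟨β, hβ, rfl⟩ := Finset.mem_image.1 hℓ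
      exact Or.inr ⟨β, hlt β hβ, Or.inr rfl⟩
    have hx := fresh_mem (mk_used_lt a)
    have := (good_lang a).compl_inter_infinite_of_not_hasDenseTerm (baseLits_subset_lang a) hcov.2
      hx (s := ofLits g) (admissible_ofLits hg)
      (by simpa [g, Finset.set_biInter_finset_image] using
        ih fun α hα => hΓ α (Finset.mem_insert_of_mem hα))
    rw [Finset.set_biInter_insert, hcov.stages_eq]
    simpa [g, Finset.set_biInter_finset_image] using this.nonempty

def lits : Set (Set ℕ) := ⋃ α, langLe α

abbrev topology : TopologicalSpace ℕ := .generateFrom lits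

def remoteFilter : Set (Set ℕ) :=
  {s | IsClosed[topology] s ∧ ∃ Γ : Finset Stage, (∀ α ∈ Γ, Covers α) ∧ ⋂ α ∈ Γ, (stages α).1ᶜ ⊆ s}

section Topology

attribute [local instance] topology

theorem stages_mem_lits (α : Stage) : (stages α).1 ∈ lits :=
  mem_iUnion.2 ⟨α, Or.inr (Or.inl rfl)⟩

theorem sepSet_mem_lits (n m : ℕ) : sepSet n m ∈ lits :=
  mem_iUnion.2 ⟨enum.symm ∅, Or.inl (baseLits_subset_lang _ (sepSet_mem_baseLits n m))⟩

theorem isClopen_of_mem_lits {ℓ : Set ℕ} (h : ℓ ∈ lits) : IsClopen ℓ := by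
  have compl_mem : ∀ ℓ ∈ lits, ℓᶜ ∈ lits := by
    intro ℓ hℓ
    obtain ⟨α, hℓ | rfl | rfl⟩ := mem_iUnion.1 hℓ
    · exact mem_iUnion.2 ⟨α, Or.inl (compl_mem_lang hℓ)⟩
    · exact mem_iUnion.2 ⟨α, Or.inr (Or.inr rfl)⟩
    · exact mem_iUnion.2 ⟨α, Or.inr (Or.inl (compl_compl _))⟩
  exact ⟨isOpen_compl_iff.1 (.basic _ (compl_mem ℓ h)), .basic _ h⟩

theorem exists_subset_langLe {g : Finset (Set ℕ)} (hg : ↑g ⊆ lits) :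
    ∃ α, ↑g ⊆ langLe α :=
  haveI : Nonempty Stage := ⟨enum.symm ∅⟩
  langLe_mono.directed_le.exists_mem_subset_of_finset_subset_biUnion hg

theorem isTopologicalBasis_sInter :
    TopologicalSpace.IsTopologicalBasis ((fun f => ⋂₀ f) '' {f | f.Finite ∧ f ⊆ lits}) :=
  TopologicalSpace.isTopologicalBasis_of_subbasis rfl

theorem not_isOpen_singleton (n : ℕ) : ¬ IsOpen ({n} : Set ℕ) := by
  intro hopen
  obtain ⟨_, ⟨f, ⟨hf, hfl⟩, rfl⟩, hn, hsub⟩ := isTopologicalBasis_sInter.isOpen_iff.1 hopen n rfl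
  simp only at hn hsub
  obtain ⟨α, hα⟩ := exists_subset_langLe (g := hf.toFinset) (by simpa using hfl)
  have hval : (ofLits hf.toFinset).val = ⋂₀ f := by simp [sInter_eq_biInter]
  have := (good_lang α).extend_stage.eq_empty_of_finite (admissible_ofLits hα)
    (hval ▸ (finite_singleton n).subset hsub)
  rw [← hval, this] at hn
  exact hn

theorem t2Space : T2Space ℕ :=
  ⟨fun n m h => ⟨sepSet n m, (sepSet n m)ᶜ, (isClopen_of_mem_lits (sepSet_mem_lits n m)).2,
    (isClopen_of_mem_lits (sepSet_mem_lits n m)).1.isOpen_compl, mem_sepSet_self n m,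
    notMem_sepSet h, disjoint_compl_right⟩⟩

theorem isTopologicalBasis_clopen :
    TopologicalSpace.IsTopologicalBasis {s : Set ℕ | IsClopen s} := by
  refine TopologicalSpace.isTopologicalBasis_of_isOpen_of_nhds (fun u hu => hu.2)
    fun a u hau hu => ?_
  obtain ⟨_, ⟨f, ⟨hf, hfl⟩, rfl⟩, hat, hsub⟩ := isTopologicalBasis_sInter.isOpen_iff.1 hu a hau
  refine ⟨⋂₀ f, ?_, hat, hsub⟩
  rw [sInter_eq_biInter]
  exact hf.isClopen_biInter fun ℓ hℓ => isClopen_of_mem_lits (hfl hℓ)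

theorem closed_nonempty_of_mem_remoteFilter {s : Set ℕ} (hs : s ∈ remoteFilter) :
    IsClosed s ∧ s.Nonempty :=
  ⟨hs.1, let ⟨Γ, hΓ, hsub⟩ := hs.2; (nonempty_iInter_compl_stages Γ hΓ).mono hsub⟩

theorem inter_mem_remoteFilter {s t : Set ℕ} (hs : s ∈ remoteFilter) (ht : t ∈ remoteFilter) :
    s ∩ t ∈ remoteFilter := by
  classical
  obtain ⟨hs, Γ, hΓ, hsub⟩ := hs
  obtain ⟨ht, Δ, hΔ, htub⟩ := ht
  refine ⟨hs.inter ht, Γ ∪ Δ, fun α hα => ?_, ?_⟩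
  · rcases Finset.mem_union.1 hα with hα | hα
    exacts [hΓ α hα, hΔ α hα]
  · rw [Finset.set_biInter_inter]
    exact inter_subset_inter hsub htub

theorem exists_remoteFilter_disjoint {A : Set ℕ} (hA : interior A = ∅) :
    ∃ F ∈ remoteFilter, F ∩ A = ∅ := by
  set α := enum.symm A
  have hopen : IsOpen (stages α).1 := (isClopen_of_mem_lits (stages_mem_lits α)).2
  by_cases hcov : Covers α
  · refine ⟨(stages α).1ᶜ, ⟨hopen.isClosed_compl, {α}, by simpa using hcov, by simp⟩, ?_⟩
    rw [hcov.stages_eq, Equiv.apply_symm_apply, compl_union, inter_assoc, compl_inter_self,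
      inter_empty]
  · obtain ⟨hne, hsub⟩ := stages_nonempty_subset_of_not_covers hcov
    rw [Equiv.apply_symm_apply] at hsub
    exact absurd (interior_maximal hsub hopen) (hA ▸ hne.not_subset_empty)

end Topology

end StronglyRemote

/-- There is a crowded Hausdorff zerodimensional topology on ω with a strongly remote
closed filter. -/
theorem exists_strongly_remote_filter :
    ∃ (τ : TopologicalSpace ℕ) (F : Set (Set ℕ)),
      (∀ x : ℕ, ¬ @IsOpen ℕ τ {x}) ∧
      (@T2Space ℕ τ) ∧
      (@TopologicalSpace.IsTopologicalBasis ℕ τ {s : Set ℕ | @IsClopen ℕ τ s}) ∧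
      F.Nonempty ∧
      (∀ s ∈ F, @IsClosed ℕ τ s ∧ s.Nonempty) ∧
      (∀ s ∈ F, ∀ t ∈ F, s ∩ t ∈ F) ∧
      (∀ s ∈ F, ∀ t : Set ℕ, s ⊆ t → @IsClosed ℕ τ t → t ∈ F) ∧
      (∀ A : Set ℕ, @interior ℕ τ A = ∅ → ∃ F' ∈ F, F' ∩ A = ∅) := by
  open StronglyRemote in
  exact ⟨topology, remoteFilter, not_isOpen_singleton, t2Space, isTopologicalBasis_clopen,
    ⟨univ, @isClosed_univ ℕ topology, ∅, by simp, by simp⟩,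
    fun s hs => closed_nonempty_of_mem_remoteFilter hs,
    fun s hs t ht => inter_mem_remoteFilter hs ht,
    fun s ⟨_, Γ, hΓ, hsub⟩ t hst ht => ⟨ht, Γ, hΓ, hsub.trans hst⟩,
    fun A hA => exists_remoteFilter_disjoint hA⟩
end
end
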